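/- arXiv:1206.1300 — 7 statements merged into one kernel-verified Lean document; each statement's English description precedes it below -/
import Mathlib

section
/- Let s ≥ 2 and k ≥ 3 be integers and let ∑_{i∈W} a_i x_i + a^0 ∑_{i∉W} x_i ≥ (s+1)a^0 be a facet defining (s+1)-inequality of Q(C_{sk}^k). Then there exists a simple directed cycle in G(C_{sk}^k) having exactly k arcs of length k+1 whose heads are precisely the elements of W, and n_2 arcs of length k, such that, setting n_1 = (n_2 + k + 1)/s (a positive integer), k' = k − n_1 and n' = sk − n_2 − k, one has k' ≥ 1 and n' = s·k' + 1; in particular ⌈n'/k'⌉ = s+1 > ⌈(sk)/k⌉ = s, so the inequality is the minor inequality of a relevant circulant minor isomorphic to C_{n'}^{k'} with n' ≡ 1 (mod k'). -/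
/-- `Cseg n k i` is the set `C^i = {i, i+1, …, i+k−1} ⊆ ℤ_n`. -/
def Cseg (n k : ℕ) (i : ZMod n) : Finset (ZMod n) :=
  (Finset.range k).image fun h : ℕ => i + (h : ZMod n)

/-- A cover of the circulant matrix `C_n^k`. -/
def IsCover (n k : ℕ) (x : Finset (ZMod n)) : Prop :=
  ∀ i : ZMod n, (x ∩ Cseg n k i).Nonempty

/-- A minimal cover of `C_n^k`. -/
def IsMinimalCover (n k : ℕ) (x : Finset (ZMod n)) : Prop :=
  IsCover n k x ∧ ∀ y : Finset (ZMod n), y ⊂ x → ¬ IsCover n k y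

/-- The covering number `τ(C_n^k)`. -/
noncomputable def coveringNumber (n k : ℕ) : ℕ :=
  sInf {m : ℕ | ∃ x : Finset (ZMod n), IsCover n k x ∧ x.card = m}

/-- A minimum cover of `C_n^k`. -/
noncomputable def IsMinimumCover (n k : ℕ) (x : Finset (ZMod n)) : Prop :=
  IsCover n k x ∧ x.card = coveringNumber n k

/-- `xcov n k i` is the cover `x^i = {i + h·k : 0 ≤ h ≤ ⌈n/k⌉ − 1}`. -/
def xcov (n k : ℕ) (i : ZMod n) : Finset (ZMod n) :=
  (Finset.range ((n + k - 1) / k)).image fun h : ℕ => i + ((h * k : ℕ) : ZMod n)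

/-- The cyclic closed interval `[a,b]_n` of `ℤ_n`. -/
def cycInterval (n : ℕ) (a b : ZMod n) : Finset (ZMod n) :=
  (Finset.range ((b - a).val + 1)).image fun h : ℕ => a + (h : ZMod n)

/-- The inequality `a·x ≥ α` is valid for `Q(C_n^k)`. -/
def IsValid (n k : ℕ) (a : ZMod n → ℤ) (α : ℤ) : Prop :=
  ∀ x : Finset (ZMod n), IsCover n k x → α ≤ ∑ i ∈ x, a i

/-- A root of a valid inequality: a cover satisfying it with equality. -/
def IsRoot (n k : ℕ) (a : ZMod n → ℤ) (α : ℤ) (x : Finset (ZMod n)) : Prop :=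
  IsCover n k x ∧ ∑ i ∈ x, a i = α

/-- Characteristic vector of a subset of `ℤ_n`. -/
noncomputable def charVec (n : ℕ) (x : Finset (ZMod n)) : ZMod n → ℝ :=
  fun i => if i ∈ x then 1 else 0

/-- `a·x ≥ α` is facet defining for `Q(C_n^k)`: it is valid, and the characteristic
vectors of its roots affinely span an `(n−1)`-dimensional affine subspace of `ℝ^n`. -/
def IsFacet (n k : ℕ) (a : ZMod n → ℤ) (α : ℤ) : Prop :=
  IsValid n k a α ∧
    Module.finrank ℝ
      (affineSpan ℝ
        {v : ZMod n → ℝ | ∃ x : Finset (ZMod n), IsRoot n k a α x ∧ v = charVec n x}).direction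
      = n - 1

/-- `a·x ≥ α` is a positive multiple of one of the boolean inequalities
`x_i ≥ 0`, `−x_i ≥ −1`, `∑_{j ∈ C^i} x_j ≥ 1`. -/
def IsBooleanMultiple (n k : ℕ) (a : ZMod n → ℤ) (α : ℤ) : Prop :=
  ∃ c : ℤ, 0 < c ∧
    ( (∃ i : ZMod n, (∀ j, a j = if j = i then c else 0) ∧ α = 0)
    ∨ (∃ i : ZMod n, (∀ j, a j = if j = i then -c else 0) ∧ α = -c)
    ∨ (∃ i : ZMod n, (∀ j, a j = if j ∈ Cseg n k i then c else 0) ∧ α = c) )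

/-- `a·x ≥ α` is a positive multiple of the rank constraint `∑ x_i ≥ ⌈n/k⌉`. -/
def IsRankMultiple (n k : ℕ) (a : ZMod n → ℤ) (α : ℤ) : Prop :=
  ∃ c : ℤ, 0 < c ∧ (∀ j, a j = c) ∧ α = c * (((n + k - 1) / k : ℕ) : ℤ)

/-- A simple directed cycle in the digraph `G(C_n^k)` (vertex set `ℤ_n`, arcs
`i → i+k` of length `k` and `i → i+k+1` of length `k+1`): a cyclic sequence of
`m ≥ 1` pairwise distinct vertices each consecutive pair of which is an arc. -/
structure SimpleDicycle (n k : ℕ) where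
  m : ℕ
  hm : 0 < m
  v : ZMod m → ZMod n
  inj : Function.Injective v
  step : ∀ t : ZMod m,
    v (t + 1) = v t + ((k : ℕ) : ZMod n) ∨ v (t + 1) = v t + ((k + 1 : ℕ) : ZMod n)

/-!
A root of an `(s+1)`-inequality is either a minimum cover, i.e. a residue class mod `k`, or a
cover of size `s + 1` avoiding `W`. Validity makes every residue class meet `W`, and if two
elements of `W` shared a class, all roots would satisfy a second linear equation; so `W` has
exactly one element in each class. Taking from every vertex the arc of length `k + 1` exactly
when its head lies in `W` then walks through the classes in cyclic order and closes up into a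
simple dicycle whose long arcs have heads exactly `W`. If it has `m` vertices, its total length
`k m + k` is a multiple of `sk`, so `s ∣ m + 1`, and `m ≤ sk`. The only case left,
`m = sk - 1`, forces `W` to contain a row `C^p`; then every root meets `W`, so the roots are
among the `k` minimum covers, too few for a facet.
-/

open Finset Function

section Covers

variable {n k : ℕ} {x : Finset (ZMod n)}

theorem IsCover.surjOn_sub (hx : IsCover n k x) :
    Set.SurjOn (fun p : ZMod n × ℕ => p.1 - p.2) ↑(x ×ˢ range k) Set.univ := by
  intro i _
  obtain ⟨e, he⟩ := hx i
  obtain ⟨hex, h, hh, rfl⟩ : e ∈ x ∧ ∃ h < k, i + (h : ZMod n) = e := by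
    simpa [Cseg] using mem_inter.1 he
  exact ⟨(i + h, h), by simp [hex, hh], by simp⟩

theorem IsCover.le_card_mul [NeZero n] (hx : IsCover n k x) : n ≤ #x * k := by
  have := card_le_card_of_surjOn (s := x ×ˢ range k) (t := univ) _
    (by simpa only [coe_univ] using hx.surjOn_sub)
  simpa [ZMod.card] using this

/-- Every row `C^i` contains exactly one element of such a cover; for the row `C^(e+1)` it can
only be `e + k`, since `C^e` already contains `e`. -/
theorem IsCover.add_mem_of_card_mul_eq [NeZero n] (hx : IsCover n k x) (hk : 0 < k)
    (hcard : #x * k = n) {e : ZMod n} (he : e ∈ x) : e + (k : ZMod n) ∈ x := by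
  have hinj : Set.InjOn (fun p : ZMod n × ℕ => p.1 - p.2) ↑(x ×ˢ range k) :=
    injOn_of_surjOn_of_card_le _ (fun _ _ => mem_univ _) (by simpa using hx.surjOn_sub)
      (by simp [ZMod.card, hcard])
  obtain ⟨⟨e', h⟩, hmem, hsub⟩ := hx.surjOn_sub (Set.mem_univ (e + 1))
  simp only [coe_product, coe_range, Set.mem_prod, mem_coe, Set.mem_Iio] at hmem
  obtain rfl : h = k - 1 := by
    by_contra hne
    have := @hinj (e', h + 1) (by simp [hmem.1]; omega) (e, 0) (by simp [he, hk])
      (by simp only at hsub ⊢; push_cast; linear_combination hsub)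
    simp at this
  convert hmem.1 using 1
  rw [sub_eq_iff_eq_add.1 (show e' - _ = _ from hsub), Nat.cast_pred hk]
  ring

end Covers

theorem add_nsmul_mem_of_forall_add_mem {G : Type*} [AddMonoid G] {x : Set G} {d : G}
    (hx : ∀ e ∈ x, e + d ∈ x) {e : G} (he : e ∈ x) (t : ℕ) : e + t • d ∈ x := by
  induction t with
  | zero => simpa using he
  | succ t ih => simpa [succ_nsmul, ← add_assoc] using hx _ ih

section Residue

variable (s k : ℕ)

def residue : ZMod (s * k) →+* ZMod k := ZMod.castHom (dvd_mul_left k s) (ZMod k)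

@[simp]
theorem residue_natCast (m : ℕ) : residue s k m = m := map_natCast _ m

variable [NeZero s] [NeZero k]

/-- The minimum cover `x^j = xcov (s * k) k j` for any `j` of residue `c`. -/
def residueClass (c : ZMod k) : Finset (ZMod (s * k)) := {z | residue s k z = c}

variable {s k}

@[simp]
theorem mem_residueClass {c : ZMod k} {z : ZMod (s * k)} :
    z ∈ residueClass s k c ↔ residue s k z = c := by
  simp [residueClass]

theorem exists_lt_eq_mul_of_residue_eq_zero {z : ZMod (s * k)} (hz : residue s k z = 0) :
    ∃ t < s, z = ((t * k : ℕ) : ZMod (s * k)) := by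
  obtain ⟨t, ht⟩ : k ∣ z.val := by
    rwa [← ZMod.natCast_eq_zero_iff, ← residue_natCast (s := s), ZMod.natCast_zmod_val]
  refine ⟨t, ?_, by rw [Nat.mul_comm t k, ← ht, ZMod.natCast_zmod_val]⟩
  have := z.val_lt
  rw [ht, mul_comm s] at this
  exact Nat.lt_of_mul_lt_mul_left this

theorem IsCover.le_card {x : Finset (ZMod (s * k))} (hx : IsCover (s * k) k x) : s ≤ #x :=
  Nat.le_of_mul_le_mul_right hx.le_card_mul (Nat.pos_of_neZero k)

theorem residueClass_isCover (c : ZMod k) : IsCover (s * k) k (residueClass s k c) := by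
  intro i
  refine ⟨i + ((c - residue s k i).val : ℕ), mem_inter.2 ⟨?_, ?_⟩⟩
  · simp
  · exact mem_image.2 ⟨_, mem_range.2 (ZMod.val_lt _), rfl⟩

theorem card_residueClass_le (c : ZMod k) : #(residueClass s k c) ≤ s := by
  obtain ⟨z, rfl⟩ := ZMod.ringHom_surjective (residue s k) c
  calc #(residueClass s k (residue s k z))
      ≤ #((range s).image fun t => z + ((t * k : ℕ) : ZMod (s * k))) := by
        refine card_le_card fun y hy => ?_
        obtain ⟨t, ht, hyz⟩ := exists_lt_eq_mul_of_residue_eq_zero (z := y - z)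
          (by rw [map_sub, (mem_residueClass.1 hy), sub_self])
        exact mem_image.2 ⟨t, mem_range.2 ht, by rw [← hyz, add_sub_cancel]⟩
    _ ≤ s := card_image_le.trans (card_range s).le

theorem IsCover.mem_range_residueClass_of_card_eq {x : Finset (ZMod (s * k))}
    (hx : IsCover (s * k) k x) (hcard : #x = s) : x ∈ Set.range (residueClass s k) := by
  obtain ⟨e, he⟩ := card_pos.1 (hcard ▸ Nat.pos_of_neZero s)
  have hclosed : ∀ e ∈ (x : Set (ZMod (s * k))), e + (k : ZMod (s * k)) ∈ x :=
    fun e he => hx.add_mem_of_card_mul_eq (Nat.pos_of_neZero k) (by rw [hcard]) he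
  refine ⟨residue s k e, eq_of_subset_of_card_le (fun z hz => ?_) ?_⟩
  · obtain ⟨t, -, hzt⟩ := exists_lt_eq_mul_of_residue_eq_zero (z := z - e)
      (by rw [map_sub, mem_residueClass.1 hz, sub_self])
    have := add_nsmul_mem_of_forall_add_mem hclosed he t
    rwa [nsmul_eq_mul, ← Nat.cast_mul, ← hzt, add_sub_cancel] at this
  · rw [hcard]
    exact (residueClass_isCover (residue s k e)).le_card

end Residue

theorem finrank_vectorSpan_add_le_of_surjective {K V W : Type*} [DivisionRing K]
    [AddCommGroup V] [Module K V] [FiniteDimensional K V] [AddCommGroup W] [Module K W]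
    {S : Set V} (Φ : V →ₗ[K] W) (hΦ : Surjective Φ) {c : W} (hS : ∀ v ∈ S, Φ v = c) :
    Module.finrank K (vectorSpan K S) + Module.finrank K W ≤ Module.finrank K V := by
  have hle : vectorSpan K S ≤ LinearMap.ker Φ := by
    rw [vectorSpan_def, Submodule.span_le]
    rintro _ ⟨u, hu, v, hv, rfl⟩
    simp [hS u hu, hS v hv]
  have := LinearMap.finrank_range_add_finrank_ker Φ
  rw [LinearMap.range_eq_top.2 hΦ, finrank_top] at this
  have := Submodule.finrank_mono hle
  omega

section Facet

variable {n k : ℕ} {a : ZMod n → ℤ} {α : ℤ}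

theorem sum_mul_charVec [NeZero n] (b : ZMod n → ℝ) (x : Finset (ZMod n)) :
    ∑ i, b i * charVec n x i = ∑ i ∈ x, b i := by
  simp [charVec, sum_ite_mem]

/-- Otherwise `x_w = x_w'` and `a·x = α` would be two independent equations satisfied by all
roots. -/
theorem IsFacet.exists_isRoot_not_mem_iff [NeZero n] (hfacet : IsFacet n k a α) {w w' : ZMod n}
    (hne : w ≠ w') (ha : a w + a w' ≠ 0) : ∃ x, IsRoot n k a α x ∧ ¬(w ∈ x ↔ w' ∈ x) := by
  by_contra! hroots
  let Φ : (ZMod n → ℝ) →ₗ[ℝ] ℝ × ℝ :=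
    LinearMap.prod ((LinearMap.proj w : (ZMod n → ℝ) →ₗ[ℝ] ℝ) - LinearMap.proj w')
      (∑ i, (a i : ℝ) • (LinearMap.proj i : (ZMod n → ℝ) →ₗ[ℝ] ℝ))
  have hΦ : ∀ v, Φ v = (v w - v w', ∑ i, (a i : ℝ) * v i) := fun v => by simp [Φ]
  have hsurj : Surjective Φ := by
    rintro ⟨p, q⟩
    have ha' : (a w : ℝ) + a w' ≠ 0 := by exact_mod_cast ha
    set μ := (q - p * a w) / (a w + a w')
    refine ⟨Pi.single w (p + μ) + Pi.single w' μ, ?_⟩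
    simp only [hΦ, Pi.add_apply, Pi.single_apply, hne, hne.symm, mul_add, mul_ite, mul_zero,
      sum_add_distrib, sum_ite_eq', mem_univ, if_true, if_false]
    refine Prod.ext (by simp) ?_
    simp only [μ]
    field_simp
    ring
  have hle := finrank_vectorSpan_add_le_of_surjective Φ hsurj (c := (0, (α : ℝ)))
    (S := {v | ∃ x, IsRoot n k a α x ∧ v = charVec n x}) (by
      rintro _ ⟨x, hx, rfl⟩
      rw [hΦ, sum_mul_charVec, ← hx.2]
      simp [charVec, hroots x hx])
  have hdim := hfacet.2
  rw [direction_affineSpan] at hdim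
  simp [ZMod.card] at hle
  omega

theorem IsFacet.le_card_of_isRoot_mem_range {ι : Type*} [Fintype ι] [Nonempty ι]
    (hfacet : IsFacet n k a α) (p : ι → Finset (ZMod n))
    (hp : ∀ x, IsRoot n k a α x → x ∈ Set.range p) : n ≤ Fintype.card ι := by
  have hdim := hfacet.2
  rw [direction_affineSpan] at hdim
  have hsub : {v | ∃ x, IsRoot n k a α x ∧ v = charVec n x} ⊆ Set.range (charVec n ∘ p) := by
    rintro _ ⟨x, hx, rfl⟩
    obtain ⟨i, rfl⟩ := hp x hx
    exact ⟨i, rfl⟩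
  have hpos := Fintype.card_pos (α := ι)
  have := (Submodule.finrank_mono (vectorSpan_mono ℝ hsub)).trans
    (finrank_vectorSpan_range_le ℝ (charVec n ∘ p) (Nat.sub_add_cancel hpos).symm)
  omega

end Facet

section SuccInequality

variable {s k : ℕ} [NeZero s] [NeZero k] {W : Finset (ZMod (s * k))} {a : ZMod (s * k) → ℤ}
  {a0 : ℤ}

theorem exists_mem_residue_eq_of_isValid (ha0 : 0 < a0)
    (hvalid : IsValid (s * k) k (fun i => if i ∈ W then a i else a0) (((s : ℤ) + 1) * a0))
    (c : ZMod k) : ∃ w ∈ W, residue s k w = c := by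
  by_contra! hc
  have hval := hvalid _ (residueClass_isCover c)
  rw [sum_congr rfl fun i hi => if_neg fun hiW => hc i hiW (mem_residueClass.1 hi), sum_const,
    nsmul_eq_mul] at hval
  have : (#(residueClass s k c) : ℤ) ≤ s := by exact_mod_cast card_residueClass_le c
  nlinarith

/-- Each element of `W` costs at least one more than `a0`, so a root using more than the
minimum number `s` of elements cannot afford any of them. -/
theorem IsRoot.mem_range_residueClass_or_disjoint (ha0 : 0 ≤ a0) (ha : ∀ i ∈ W, a0 + 1 ≤ a i)
    {x : Finset (ZMod (s * k))}
    (hx : IsRoot (s * k) k (fun i => if i ∈ W then a i else a0) (((s : ℤ) + 1) * a0) x) :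
    x ∈ Set.range (residueClass s k) ∨ Disjoint x W := by
  have hsum : a0 * #x + #{i ∈ x | i ∈ W} ≤ ((s : ℤ) + 1) * a0 := by
    rw [← hx.2, mul_comm, ← nsmul_eq_mul, ← sum_const, ← sum_boole (R := ℤ), ← sum_add_distrib]
    refine sum_le_sum fun i _ => ?_
    split_ifs with hi
    exacts [ha i hi, by simp]
  rcases hx.1.le_card.eq_or_lt with hcard | hcard
  · exact Or.inl (hx.1.mem_range_residueClass_of_card_eq hcard.symm)
  · right
    have : ((s : ℤ) + 1) * a0 ≤ a0 * #x := by
      rw [mul_comm]; exact mul_le_mul_of_nonneg_left (by exact_mod_cast hcard) ha0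
    have hempty : {i ∈ x | i ∈ W} = ∅ := card_eq_zero.1 (by omega)
    exact disjoint_left.2 fun i hix hiW => by
      simpa using (filter_eq_empty_iff.1 hempty) hix hiW

theorem residue_injOn_of_isFacet (ha0 : 0 ≤ a0) (ha : ∀ i ∈ W, a0 + 1 ≤ a i)
    (hfacet : IsFacet (s * k) k (fun i => if i ∈ W then a i else a0) (((s : ℤ) + 1) * a0)) :
    Set.InjOn (residue s k) W := by
  intro w hw w' hw' hww'
  by_contra hne
  obtain ⟨x, hx, hsep⟩ := hfacet.exists_isRoot_not_mem_iff hne <| ne_of_gt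
    (by simp only [mem_coe.1 hw, mem_coe.1 hw', if_true]; linarith [ha w hw, ha w' hw'])
  rcases hx.mem_range_residueClass_or_disjoint ha0 ha with ⟨c, rfl⟩ | hdisj
  · simp [hww'] at hsep
  · exact hsep (iff_of_false (disjoint_right.1 hdisj hw) (disjoint_right.1 hdisj hw'))

/-- Every root would meet `W`, hence be one of the `k` minimum covers: too few to span a
facet. -/
theorem not_cseg_subset_of_isFacet (hs : 2 ≤ s) (ha0 : 0 ≤ a0) (ha : ∀ i ∈ W, a0 + 1 ≤ a i)
    (hfacet : IsFacet (s * k) k (fun i => if i ∈ W then a i else a0) (((s : ℤ) + 1) * a0))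
    (p : ZMod (s * k)) : ¬Cseg (s * k) k p ⊆ W := by
  intro hsub
  have hle := hfacet.le_card_of_isRoot_mem_range (residueClass s k) fun x hx => by
    refine (hx.mem_range_residueClass_or_disjoint ha0 ha).resolve_right fun hdisj => ?_
    obtain ⟨e, he⟩ := hx.1 p
    rw [mem_inter] at he
    exact disjoint_left.1 hdisj he.1 (hsub he.2)
  rw [ZMod.card] at hle
  nlinarith [Nat.pos_of_neZero k]

theorem bijOn_residue_of_isFacet (ha0 : 0 < a0) (ha : ∀ i ∈ W, a0 + 1 ≤ a i)
    (hfacet : IsFacet (s * k) k (fun i => if i ∈ W then a i else a0) (((s : ℤ) + 1) * a0)) :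
    Set.BijOn (residue s k) W Set.univ :=
  ⟨Set.mapsTo_univ _ _, residue_injOn_of_isFacet ha0.le ha hfacet,
    fun c _ => exists_mem_residue_eq_of_isValid ha0 hfacet.1 c⟩

end SuccInequality

section PeriodicOrbit

variable {α : Type*} (f : α → α) (x : α)

noncomputable def periodicOrbitCycle : ZMod (minimalPeriod f x) → α := fun t => f^[t.val] x

variable {f x}

theorem periodicOrbitCycle_natCast (m : ℕ) : periodicOrbitCycle f x m = f^[m] x := by
  simp [periodicOrbitCycle, ZMod.val_natCast, iterate_mod_minimalPeriod_eq]

theorem periodicOrbitCycle_add_one (hx : 0 < minimalPeriod f x) (t : ZMod (minimalPeriod f x)) :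
    periodicOrbitCycle f x (t + 1) = f (periodicOrbitCycle f x t) := by
  have := NeZero.of_pos hx
  rw [← ZMod.natCast_zmod_val t, ← Nat.cast_succ, periodicOrbitCycle_natCast,
    periodicOrbitCycle_natCast, iterate_succ_apply']

theorem periodicOrbitCycle_injective (hx : 0 < minimalPeriod f x) :
    Injective (periodicOrbitCycle f x) := by
  have := NeZero.of_pos hx
  intro t t' h
  exact ZMod.val_injective _
    ((iterate_eq_iterate_iff_of_lt_minimalPeriod t.val_lt t'.val_lt).1 h)

end PeriodicOrbit

namespace SimpleDicycle

variable {n k : ℕ}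

noncomputable def ofPeriodicPt (f : ZMod n → ZMod n)
    (hf : ∀ z, f z = z + (k : ZMod n) ∨ f z = z + ((k + 1 : ℕ) : ZMod n)) (x : ZMod n)
    (hx : 0 < minimalPeriod f x) : SimpleDicycle n k where
  m := minimalPeriod f x
  hm := hx
  v := periodicOrbitCycle f x
  inj := periodicOrbitCycle_injective hx
  step t := by rw [periodicOrbitCycle_add_one hx]; exact hf _

variable (D : SimpleDicycle n k)

def longArcs : Set (ZMod D.m) := {t | D.v (t + 1) = D.v t + ((k + 1 : ℕ) : ZMod n)}

def shortArcs : Set (ZMod D.m) := {t | D.v (t + 1) = D.v t + ((k : ℕ) : ZMod n)}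

def heads : Set (ZMod n) :=
  {w | ∃ t, D.v (t + 1) = D.v t + ((k + 1 : ℕ) : ZMod n) ∧ w = D.v (t + 1)}

theorem m_le [NeZero n] : D.m ≤ n := by
  have := NeZero.of_pos D.hm
  simpa [ZMod.card] using Fintype.card_le_of_injective _ D.inj

theorem ncard_longArcs : D.longArcs.ncard = D.heads.ncard := by
  have hinj : Injective fun t => D.v (t + 1) := D.inj.comp (add_left_injective 1)
  rw [← Set.ncard_image_of_injective _ hinj]
  congr 1
  ext w
  simp [longArcs, heads, eq_comm]

theorem ncard_shortArcs_add_ncard_longArcs (hn : 1 < n) :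
    D.shortArcs.ncard + D.longArcs.ncard = D.m := by
  have := NeZero.of_pos D.hm
  have : Fact (1 < n) := ⟨hn⟩
  have : D.shortArcs = D.longArcsᶜ := by
    ext t
    rcases D.step t with h | h <;> simp [shortArcs, longArcs, h]
  rw [this, Set.ncard_compl_add_ncard, Nat.card_zmod]

/-- `D.m * k + #longArcs` is the total length of the arcs of `D`. -/
theorem natCast_length_eq_zero : ((D.m * k + D.longArcs.ncard : ℕ) : ZMod n) = 0 := by
  have := NeZero.of_pos D.hm
  classical
  have htel : ∑ t, (D.v (t + 1) - D.v t) = 0 := by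
    rw [sum_sub_distrib, sub_eq_zero]
    exact Fintype.sum_equiv (Equiv.addRight 1) _ _ fun _ => rfl
  have hstep : ∀ t, D.v (t + 1) - D.v t = k + if t ∈ D.longArcs then 1 else 0 := by
    intro t
    rcases D.step t with h | h <;> by_cases ht : t ∈ D.longArcs <;> simp_all [longArcs]
  rw [← htel, Fintype.sum_congr _ _ hstep, sum_add_distrib, sum_boole, Set.ncard_eq_toFinset_card']
  simp [ZMod.card]

end SimpleDicycle

theorem SimpleDicycle.dvd_m_add_one {s k : ℕ} (hk : 0 < k) (D : SimpleDicycle (s * k) k)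
    (hlong : D.longArcs.ncard = k) : s ∣ D.m + 1 := by
  have := D.natCast_length_eq_zero
  rw [hlong, ZMod.natCast_eq_zero_iff] at this
  exact Nat.dvd_of_mul_dvd_mul_right hk (by convert this using 1; ring)

theorem ZMod.natCast_ne_natCast_of_lt {n a b : ℕ} (ha : a < n) (hb : b < n) (hab : a ≠ b) :
    (a : ZMod n) ≠ b := by
  rw [Ne, ZMod.natCast_eq_natCast_iff', Nat.mod_eq_of_lt ha, Nat.mod_eq_of_lt hb]
  exact hab

section NextVertex

variable {n : ℕ} (k : ℕ) (W : Finset (ZMod n))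

def nextVertex (z : ZMod n) : ZMod n :=
  if z + ((k + 1 : ℕ) : ZMod n) ∈ W then z + ((k + 1 : ℕ) : ZMod n) else z + (k : ZMod n)

variable {k W} {z : ZMod n}

theorem nextVertex_of_mem (h : z + ((k + 1 : ℕ) : ZMod n) ∈ W) :
    nextVertex k W z = z + ((k + 1 : ℕ) : ZMod n) :=
  if_pos h

theorem nextVertex_of_notMem (h : z + ((k + 1 : ℕ) : ZMod n) ∉ W) :
    nextVertex k W z = z + (k : ZMod n) :=
  if_neg h

theorem nextVertex_eq_or (z : ZMod n) :
    nextVertex k W z = z + (k : ZMod n) ∨ nextVertex k W z = z + ((k + 1 : ℕ) : ZMod n) := by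
  by_cases h : z + ((k + 1 : ℕ) : ZMod n) ∈ W
  exacts [Or.inr (nextVertex_of_mem h), Or.inl (nextVertex_of_notMem h)]

theorem add_mem_of_nextVertex_eq (hn : 1 < n)
    (h : nextVertex k W z = z + ((k + 1 : ℕ) : ZMod n)) : z + ((k + 1 : ℕ) : ZMod n) ∈ W := by
  by_contra hW
  have : Fact (1 < n) := ⟨hn⟩
  rw [nextVertex_of_notMem hW, Nat.cast_succ, ← add_assoc] at h
  simp at h

/-- Induction along `p + 1, …, p + k`: were `y ∉ W`, the vertex `y - k - 1` would step to
`y - 1`, which is `p` or, lying in `W`, already the successor of `y - k - 2`. -/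
theorem cseg_subset_of_injOn_compl (hn : k + 2 ≤ n) {p : ZMod n}
    (hmaps : Set.MapsTo (nextVertex k W) {p}ᶜ {p}ᶜ) (hinj : Set.InjOn (nextVertex k W) {p}ᶜ) :
    Cseg n k (p + 1) ⊆ W := by
  have hne : ∀ j < k, p + (j : ZMod n) - k ≠ p := by
    intro j hj h
    have hjk : (j : ZMod n) = k := by linear_combination h
    exact ZMod.natCast_ne_natCast_of_lt (by omega) (by omega) hj.ne hjk
  suffices h : ∀ j < k, p + 1 + (j : ZMod n) ∈ W by
    intro y hy
    obtain ⟨j, hj, rfl⟩ := mem_image.1 hy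
    exact h j (mem_range.1 hj)
  intro j
  induction j with
  | zero =>
    intro hk
    by_contra hW
    have hz : p - k ∈ ({p}ᶜ : Set (ZMod n)) := by simpa using hne 0 hk
    refine hmaps hz ?_
    rw [nextVertex_of_notMem (by convert hW using 2; push_cast; ring)]
    simp
  | succ j ih =>
    intro hj
    by_contra hW
    have hz : p + (j : ZMod n) - k ∈ ({p}ᶜ : Set (ZMod n)) := hne j (by omega)
    have hz' : p + ((j + 1 : ℕ) : ZMod n) - k ∈ ({p}ᶜ : Set (ZMod n)) := hne (j + 1) hj
    have hzz' := hinj hz hz' (by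
      rw [nextVertex_of_mem (by convert ih (by omega) using 1; push_cast; ring),
        nextVertex_of_notMem (by convert hW using 2; push_cast; ring)]
      push_cast; ring)
    have : ((0 : ℕ) : ZMod n) = ((1 : ℕ) : ZMod n) := by push_cast at hzz' ⊢; linear_combination hzz'
    exact ZMod.natCast_ne_natCast_of_lt (by omega) (by omega) zero_ne_one this

end NextVertex

namespace SimpleDicycle

variable {n k : ℕ} {W : Finset (ZMod n)} (D : SimpleDicycle n k)

theorem heads_subset (hn : 1 < n) (hD : ∀ t, D.v (t + 1) = nextVertex k W (D.v t)) :
    D.heads ⊆ W := by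
  rintro _ ⟨t, ht, rfl⟩
  rw [ht]
  exact add_mem_of_nextVertex_eq hn (by rw [← hD, ht])

theorem exists_cseg_subset (hn : k + 2 ≤ n) (hD : ∀ t, D.v (t + 1) = nextVertex k W (D.v t))
    (hm : D.m + 1 = n) : ∃ p, Cseg n k p ⊆ W := by
  have : NeZero n := ⟨by omega⟩
  have : NeZero D.m := NeZero.of_pos D.hm
  obtain ⟨p, hp⟩ : ∃ p, (Set.range D.v)ᶜ = {p} := by
    rw [← Set.ncard_eq_one, Set.ncard_compl, Set.ncard_range_of_injective D.inj, Nat.card_zmod,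
      Nat.card_zmod]
    omega
  have hrange : ∀ z, z ≠ p ↔ ∃ t, D.v t = z := fun z => by
    rw [← Set.mem_range, ← not_not (a := z ∈ _), ← Set.mem_compl_iff, hp, Set.mem_singleton_iff]
  refine ⟨p + 1, cseg_subset_of_injOn_compl hn (fun z hz => ?_) fun z hz z' hz' h => ?_⟩
  · obtain ⟨t, rfl⟩ := (hrange z).1 hz
    exact (hrange _).2 ⟨t + 1, hD t⟩
  · obtain ⟨t, rfl⟩ := (hrange z).1 hz
    obtain ⟨t', rfl⟩ := (hrange z').1 hz'
    rw [← hD, ← hD] at h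
    rw [add_left_injective 1 (D.inj h)]

end SimpleDicycle

section ResidueTransversal

variable {s k : ℕ} [NeZero s] [NeZero k] {W : Finset (ZMod (s * k))}

theorem exists_iterate_nextVertex_add_mem (hsurj : ∀ c, ∃ w ∈ W, residue s k w = c)
    (z : ZMod (s * k)) :
    ∃ m, (nextVertex k W)^[m] z + ((k + 1 : ℕ) : ZMod (s * k)) ∈ W ∧
      residue s k ((nextVertex k W)^[m] z) = residue s k z := by
  classical
  have hP : ∃ t : ℕ, z + ((t * k : ℕ) : ZMod (s * k)) + ((k + 1 : ℕ) : ZMod (s * k)) ∈ W := by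
    obtain ⟨w, hw, hwc⟩ := hsurj (residue s k z + 1)
    obtain ⟨t, -, ht⟩ := exists_lt_eq_mul_of_residue_eq_zero
      (z := w - z - ((k + 1 : ℕ) : ZMod (s * k))) (by simp [hwc])
    exact ⟨t, by rw [← ht]; convert hw using 2; ring⟩
  have hiter : ∀ i ≤ Nat.find hP, (nextVertex k W)^[i] z = z + ((i * k : ℕ) : ZMod (s * k)) := by
    intro i hi
    induction i with
    | zero => simp
    | succ i ih =>
      rw [iterate_succ_apply', ih (by omega), nextVertex_of_notMem (Nat.find_min hP (by omega))]
      push_cast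
      ring
  refine ⟨Nat.find hP, ?_, ?_⟩ <;> rw [hiter _ le_rfl]
  · exact Nat.find_spec hP
  · simp

theorem exists_iterate_nextVertex_add_eq (hbij : Set.BijOn (residue s k) W Set.univ)
    (w₀ : ZMod (s * k)) {w : ZMod (s * k)} (hw : w ∈ W) :
    ∃ m, (nextVertex k W)^[m] w₀ + ((k + 1 : ℕ) : ZMod (s * k)) = w := by
  have hsurj : ∀ c, ∃ w ∈ W, residue s k w = c := fun c => hbij.surjOn (Set.mem_univ c)
  have hreach : ∀ c : ℕ, ∃ m, (nextVertex k W)^[m] w₀ + ((k + 1 : ℕ) : ZMod (s * k)) ∈ W ∧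
      residue s k ((nextVertex k W)^[m] w₀) = residue s k w₀ + c := by
    intro c
    induction c with
    | zero => simpa using exists_iterate_nextVertex_add_mem hsurj w₀
    | succ c ih =>
      obtain ⟨m, hmW, hmc⟩ := ih
      obtain ⟨m', hm'W, hm'c⟩ := exists_iterate_nextVertex_add_mem hsurj
        ((nextVertex k W)^[m + 1] w₀)
      refine ⟨m' + (m + 1), by rwa [iterate_add_apply], ?_⟩
      rw [iterate_add_apply, hm'c, iterate_succ_apply', nextVertex_of_mem hmW, map_add, hmc]
      simp
      ring
  obtain ⟨m, hmW, hmc⟩ := hreach (residue s k w - residue s k w₀ - 1).val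
  refine ⟨m, hbij.injOn hmW hw ?_⟩
  rw [map_add, hmc]
  simp
  ring

theorem exists_simpleDicycle_heads_eq (hn : 1 < s * k)
    (hbij : Set.BijOn (residue s k) W Set.univ) :
    ∃ D : SimpleDicycle (s * k) k, (∀ t, D.v (t + 1) = nextVertex k W (D.v t)) ∧ D.heads = W := by
  obtain ⟨w₀, hw₀, -⟩ := hbij.surjOn (Set.mem_univ 0)
  obtain ⟨m₀, hm₀⟩ := exists_iterate_nextVertex_add_eq hbij w₀ hw₀
  have hper : 0 < minimalPeriod (nextVertex k W) w₀ := by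
    refine IsPeriodicPt.minimalPeriod_pos (Nat.succ_pos m₀) ?_
    rw [IsPeriodicPt, IsFixedPt, iterate_succ_apply', nextVertex_of_mem (by rwa [hm₀]), hm₀]
  let D := SimpleDicycle.ofPeriodicPt (k := k) (nextVertex k W) nextVertex_eq_or w₀ hper
  have hD : ∀ t, D.v (t + 1) = nextVertex k W (D.v t) := periodicOrbitCycle_add_one hper
  refine ⟨D, hD, (D.heads_subset hn hD).antisymm fun w hw => ?_⟩
  obtain ⟨m, hm⟩ := exists_iterate_nextVertex_add_eq hbij w₀ hw
  have hv : D.v m = (nextVertex k W)^[m] w₀ := periodicOrbitCycle_natCast m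
  have hnext : D.v (m + 1) = w := by rw [hD, hv, nextVertex_of_mem (by rwa [hm]), hm]
  exact ⟨m, by rw [hnext, hv, hm], hnext.symm⟩

end ResidueTransversal

theorem lt_of_add_one_eq_mul {s k m n : ℕ} (hs : 1 < s) (hm : m + 1 = s * n) (hle : m ≤ s * k)
    (hne : m + 1 ≠ s * k) : n < k := by
  by_contra! hkn
  rcases hkn.eq_or_lt with rfl | hlt
  · exact hne hm
  · have := Nat.mul_le_mul_left s hlt
    rw [Nat.mul_succ] at this
    omega

theorem stmt11_general (s k : ℕ) (hs : 2 ≤ s) (hk : 3 ≤ k)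
    (W : Finset (ZMod (s * k)))
    (a : ZMod (s * k) → ℤ) (a0 : ℤ) (ha0 : 1 ≤ a0)
    (ha : ∀ i ∈ W, a0 + 1 ≤ a i ∧ a i ≤ 2 * a0)
    (hfacet : IsFacet (s * k) k (fun i => if i ∈ W then a i else a0) (((s : ℤ) + 1) * a0)) :
    ∃ D : SimpleDicycle (s * k) k, ∃ n2 n1 : ℕ,
      Set.ncard {t : ZMod D.m | D.v (t + 1) = D.v t + ((k + 1 : ℕ) : ZMod (s * k))} = k ∧
      {w : ZMod (s * k) | ∃ t : ZMod D.m,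
          D.v (t + 1) = D.v t + ((k + 1 : ℕ) : ZMod (s * k)) ∧ w = D.v (t + 1)} = ↑W ∧
      Set.ncard {t : ZMod D.m | D.v (t + 1) = D.v t + ((k : ℕ) : ZMod (s * k))} = n2 ∧
      n1 * s = n2 + k + 1 ∧
      1 ≤ k - n1 ∧
      s * k - n2 - k = s * (k - n1) + 1 ∧
      (s * (k - n1) + 1 + (k - n1) - 1) / (k - n1) = s + 1 ∧
      s + 1 > (s * k + k - 1) / k := by
  have : NeZero s := ⟨by omega⟩
  have : NeZero k := ⟨by omega⟩
  have hsk : k + 2 ≤ s * k := by nlinarith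
  have ha' : ∀ i ∈ W, a0 + 1 ≤ a i := fun i hi => (ha i hi).1
  have hbij := bijOn_residue_of_isFacet (by omega) ha' hfacet
  obtain ⟨D, hD, hheads⟩ := exists_simpleDicycle_heads_eq (by omega) hbij
  have hlong : D.longArcs.ncard = k := by
    rw [D.ncard_longArcs, hheads, ← hbij.injOn.ncard_image, hbij.image_eq, Set.ncard_univ,
      Nat.card_zmod]
  have hshort := D.ncard_shortArcs_add_ncard_longArcs (by omega)
  obtain ⟨n1, hn1⟩ := D.dvd_m_add_one (by omega) hlong
  have hn1k : n1 < k := lt_of_add_one_eq_mul (by omega) hn1 D.m_le fun hm => by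
    obtain ⟨p, hp⟩ := D.exists_cseg_subset hsk hD hm
    exact not_cseg_subset_of_isFacet hs (by omega) ha' hfacet p hp
  have := Nat.mul_le_mul_left s hn1k.le
  refine ⟨D, D.m - k, n1, hlong, hheads, ?_, by rw [Nat.mul_comm]; omega, by omega, ?_, ?_, ?_⟩
  · change D.shortArcs.ncard = _
    omega
  · rw [Nat.mul_sub]
    omega
  · rw [show s * (k - n1) + 1 + (k - n1) - 1 = (s + 1) * (k - n1) by rw [add_mul]; omega,
      Nat.mul_div_cancel _ (by omega)]
  · rw [gt_iff_lt, Nat.div_lt_iff_lt_mul (by omega), add_mul, one_mul]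
    omega

theorem stmt11 (s k : ℕ) (hs : 2 ≤ s) (hk : 3 ≤ k)
    (W : Finset (ZMod (s * k))) (hWne : W.Nonempty) (hWproper : ∃ i : ZMod (s * k), i ∉ W)
    (a : ZMod (s * k) → ℤ) (a0 : ℤ) (ha0 : 1 ≤ a0)
    (ha : ∀ i ∈ W, a0 + 1 ≤ a i ∧ a i ≤ 2 * a0)
    (hfacet : IsFacet (s * k) k (fun i => if i ∈ W then a i else a0) (((s : ℤ) + 1) * a0)) :
    ∃ D : SimpleDicycle (s * k) k, ∃ n2 n1 : ℕ,
      Set.ncard {t : ZMod D.m | D.v (t + 1) = D.v t + ((k + 1 : ℕ) : ZMod (s * k))} = k ∧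
      {w : ZMod (s * k) | ∃ t : ZMod D.m,
          D.v (t + 1) = D.v t + ((k + 1 : ℕ) : ZMod (s * k)) ∧ w = D.v (t + 1)} = ↑W ∧
      Set.ncard {t : ZMod D.m | D.v (t + 1) = D.v t + ((k : ℕ) : ZMod (s * k))} = n2 ∧
      n1 * s = n2 + k + 1 ∧
      1 ≤ k - n1 ∧
      s * k - n2 - k = s * (k - n1) + 1 ∧
      (s * (k - n1) + 1 + (k - n1) - 1) / (k - n1) = s + 1 ∧
      s + 1 > (s * k + k - 1) / k :=
  stmt11_general s k hs hk W a a0 ha0 ha hfacet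
end

section
/- Let k ≥ 3 be an integer. Every non boolean facet defining inequality of Q(C_{2k}^k) with positive integer coefficients is of the form a^0·(2∑_{i∈W} x_i + ∑_{i∉W} x_i) ≥ 3a^0 for some integer a^0 ≥ 1 and some W ⊆ Z_{2k} satisfying |W ∩ x^j| = 1 and |C^j ∩ (Z_{2k} ∖ W)| ≥ 2 for every j ∈ Z_{2k}; that is, it is a minor inequality corresponding to a circulant minor defined by such a W. -/
/-!
Since the coefficients are positive, a root contains no smaller cover, and a greedy walk around
`ℤ_{2k}` shows that every cover contains an antipodal pair `{q, q + k}` or a three-point cover;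
so every root is an antipodal pair or has three points. The roots span an affine hyperplane
avoiding the origin, hence an integer vector summing to zero over every root vanishes; the
remaining facts each follow by testing one such vector. No two antipodal points lie in three-point
roots; therefore
every antipodal pair is a root, exactly one of `i`, `i + k` lies in a three-point root, and `a`
equals `α / 3` on those points and `2α / 3` on the others, which form `W`.
-/

open Finset

theorem ZMod.val_add_eq_or {n : ℕ} [NeZero n] (a b : ZMod n) :
    (a + b).val = a.val + b.val ∨ (a + b).val + n = a.val + b.val := by
  rcases lt_or_ge (a.val + b.val) n with h | h
  · exact .inl (ZMod.val_add_of_lt h)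
  · exact .inr (ZMod.val_add_val_of_le h).symm

theorem ZMod.val_sub_add_val_sub {n : ℕ} [NeZero n] {p q : ZMod n} (h : p ≠ q) :
    (q - p).val + (p - q).val = n := by
  have hqp : q - p ≠ 0 := sub_ne_zero.mpr h.symm
  rw [show p - q = -(q - p) from (neg_sub q p).symm, ZMod.neg_val, if_neg hqp]
  have := ZMod.val_lt (q - p)
  omega

theorem ZMod.one_le_val_sub {n : ℕ} [NeZero n] {p q : ZMod n} (h : q ≠ p) : 1 ≤ (q - p).val :=
  Nat.one_le_iff_ne_zero.mpr fun h0 => h (sub_eq_zero.mp ((ZMod.val_eq_zero _).mp h0))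

theorem direction_affineSpan_le_ker {K V : Type*} [Field K] [AddCommGroup V] [Module K V]
    {S : Set V} {g : Module.Dual K V} {β : K} (hg : ∀ v ∈ S, g v = β) :
    (affineSpan K S).direction ≤ LinearMap.ker g := by
  rw [direction_affineSpan, vectorSpan_def, Submodule.span_le]
  rintro _ ⟨v, hv, w, hw, rfl⟩
  simp [hg v hv, hg w hw]

theorem eq_zero_of_forall_mem_apply_eq_zero {K V : Type*} [Field K] [AddCommGroup V] [Module K V]
    [FiniteDimensional K V] {S : Set V} {s₀ : V} (hs₀ : s₀ ∈ S)
    (hS : Module.finrank K (affineSpan K S).direction + 1 = Module.finrank K V)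
    {φ ψ : Module.Dual K V} {β : K} (hβ : β ≠ 0) (hφ : ∀ v ∈ S, φ v = β)
    (hψ : ∀ v ∈ S, ψ v = 0) : ψ = 0 := by
  by_contra hψ0
  have hD : (affineSpan K S).direction = LinearMap.ker ψ :=
    Submodule.eq_of_le_of_finrank_le (direction_affineSpan_le_ker hψ)
      (by have := Module.Dual.finrank_ker_add_one_of_ne_zero hψ0; omega)
  have hs₀D : s₀ ∈ (affineSpan K S).direction := hD ▸ LinearMap.mem_ker.mpr (hψ s₀ hs₀)
  exact hβ ((hφ s₀ hs₀).symm.trans (direction_affineSpan_le_ker hφ hs₀D))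

section Circulant

variable {n k : ℕ} {a : ZMod n → ℤ} {α : ℤ}

theorem IsCover.nonempty {x : Finset (ZMod n)} (hx : IsCover n k x) : x.Nonempty :=
  (hx 0).mono inter_subset_left

theorem IsRoot.eq_of_subset (hval : IsValid n k a α) (hpos : ∀ i, 0 < a i)
    {x y : Finset (ZMod n)} (hx : IsRoot n k a α x) (hyx : y ⊆ x) (hy : IsCover n k y) : y = x := by
  classical
  refine hyx.antisymm ?_
  by_contra hxy
  have hrest : 0 < ∑ i ∈ x \ y, a i := sum_pos (fun i _ => hpos i) (sdiff_nonempty.mpr hxy)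
  have := sum_sdiff (f := a) hyx
  have := hval y hy
  linarith [hx.2]

theorem IsFacet.exists_isRoot (hn : 2 ≤ n) (hfacet : IsFacet n k a α) :
    ∃ x, IsRoot n k a α x := by
  by_contra! h
  have hS : {v : ZMod n → ℝ | ∃ x, IsRoot n k a α x ∧ v = charVec n x} = ∅ :=
    Set.eq_empty_iff_forall_notMem.mpr fun v ⟨x, hx, _⟩ => h x hx
  have := hfacet.2
  rw [hS, AffineSubspace.span_empty, AffineSubspace.direction_bot, finrank_bot] at this
  omega

variable [NeZero n]

theorem mem_Cseg_iff (hkn : k ≤ n) {w l : ZMod n} : l ∈ Cseg n k w ↔ (l - w).val < k := by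
  simp only [Cseg, mem_image, mem_range]
  constructor
  · rintro ⟨h, hh, rfl⟩
    rwa [add_sub_cancel_left, ZMod.val_natCast_of_lt (by omega)]
  · exact fun h => ⟨_, h, by rw [ZMod.natCast_zmod_val, add_sub_cancel]⟩

theorem isCover_iff_exists_step (hk : 0 < k) (hkn : k < n) {x : Finset (ZMod n)} :
    IsCover n k x ↔ x.Nonempty ∧ ∀ q ∈ x, ∃ r ∈ x, r ≠ q ∧ (r - q).val ≤ k := by
  constructor
  · refine fun hx => ⟨hx.nonempty, fun q _ => ?_⟩
    obtain ⟨r, hr⟩ := hx (q + 1)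
    rw [mem_inter, mem_Cseg_iff hkn.le] at hr
    have hsplit : r - q = (r - (q + 1)) + 1 := by ring
    have hone : (1 : ZMod n).val = 1 := by rw [ZMod.val_one_eq_one_mod, Nat.mod_eq_of_lt (by omega)]
    have hval := ZMod.val_add_eq_or (r - (q + 1)) 1
    rw [← hsplit, hone] at hval
    refine ⟨r, hr.1, fun hrq => ?_, by omega⟩
    have : (r - q).val = 0 := by rw [hrq, sub_self, ZMod.val_zero]
    omega
  · rintro ⟨hne, hstep⟩ w
    -- the successor of the point farthest past `w` can neither go farther nor wrap into the window
    by_contra hw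
    have hfar : ∀ l ∈ x, k ≤ (l - w).val := fun l hl =>
      not_lt.mp fun h => hw ⟨l, mem_inter.mpr ⟨hl, (mem_Cseg_iff hkn.le).mpr h⟩⟩
    obtain ⟨q, hq, hqmax⟩ := exists_max_image x (fun l => (l - w).val) hne
    obtain ⟨r, hr, hrq, hrk⟩ := hstep q hq
    have hval := ZMod.val_add_eq_or (r - q) (q - w)
    rw [sub_add_sub_cancel] at hval
    have := ZMod.one_le_val_sub hrq
    have := ZMod.val_lt (q - w)
    have := hqmax r hr
    have := hfar r hr
    omega

theorem isCover_triple (hk : 0 < k) (hkn : k < n) {p q r : ZMod n} (hpq : q ≠ p) (hqr : r ≠ q)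
    (hrp : p ≠ r) (h₁ : (q - p).val ≤ k) (h₂ : (r - q).val ≤ k) (h₃ : (p - r).val ≤ k) :
    IsCover n k {p, q, r} := by
  rw [isCover_iff_exists_step hk hkn]
  refine ⟨insert_nonempty _ _, fun s hs => ?_⟩
  simp only [mem_insert, mem_singleton] at hs
  rcases hs with rfl | rfl | rfl
  · exact ⟨q, by simp, hpq, h₁⟩
  · exact ⟨r, by simp, hqr, h₂⟩
  · exact ⟨p, by simp, hrp, h₃⟩

theorem linearCombination_charVec (f : ZMod n → ℝ) (x : Finset (ZMod n)) :
    Fintype.linearCombination ℝ f (charVec n x) = ∑ i ∈ x, f i := by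
  simp [Fintype.linearCombination_apply, charVec, sum_ite_mem]

theorem IsFacet.eq_zero_of_forall_isRoot_sum_eq_zero (hn : 2 ≤ n) (hpos : ∀ i, 0 < a i)
    (hfacet : IsFacet n k a α) {c : ZMod n → ℤ}
    (hc : ∀ x, IsRoot n k a α x → ∑ i ∈ x, c i = 0) : c = 0 := by
  classical
  obtain ⟨x₀, hx₀⟩ := hfacet.exists_isRoot hn
  have hα : (α : ℝ) ≠ 0 := by
    rw [← hx₀.2]
    exact_mod_cast (sum_pos (fun i _ => hpos i) hx₀.1.nonempty).ne'
  have hψ := eq_zero_of_forall_mem_apply_eq_zero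
    (S := {v | ∃ x, IsRoot n k a α x ∧ v = charVec n x})
    (φ := Fintype.linearCombination ℝ (a · : ZMod n → ℝ))
    (ψ := Fintype.linearCombination ℝ (c · : ZMod n → ℝ)) ⟨x₀, hx₀, rfl⟩
    (by rw [hfacet.2, Module.finrank_fintype_fun_eq_card, ZMod.card]; have := NeZero.pos n; omega)
    hα (fun _ ⟨x, hx, hv⟩ => by rw [hv, linearCombination_charVec]; exact_mod_cast hx.2)
    (fun _ ⟨x, hx, hv⟩ => by rw [hv, linearCombination_charVec]; exact_mod_cast hc x hx)
  funext i
  simpa using LinearMap.congr_fun hψ (Pi.single i 1)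

theorem IsFacet.exists_isRoot_mem (hn : 2 ≤ n) (hpos : ∀ i, 0 < a i) (hfacet : IsFacet n k a α)
    (p : ZMod n) : ∃ x, IsRoot n k a α x ∧ p ∈ x := by
  classical
  by_contra! h
  have := congrFun (hfacet.eq_zero_of_forall_isRoot_sum_eq_zero hn hpos
    (c := fun i => if i = p then 1 else 0) fun x hx => by simp [h x hx]) p
  simp at this

end Circulant

def InTripleRoot (n k : ℕ) (a : ZMod n → ℤ) (α : ℤ) (i : ZMod n) : Prop :=
  ∃ x, IsRoot n k a α x ∧ x.card = 3 ∧ i ∈ x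

theorem mem_of_forall_inTripleRoot_mem_Cseg {n k : ℕ} {a : ZMod n → ℤ} {α : ℤ} {j m : ZMod n}
    (hm : ∀ l ∈ Cseg n k j, InTripleRoot n k a α l → l = m)
    {x : Finset (ZMod n)} (hx : IsRoot n k a α x) (hx3 : x.card = 3) : m ∈ x := by
  obtain ⟨l, hl⟩ := hx.1 j
  rw [mem_inter] at hl
  rw [← hm l hl.2 ⟨x, hx, hx3, hl.1⟩]
  exact hl.1

section Antipodal

variable {k : ℕ}

theorem add_half_add_half (z : ZMod (2 * k)) : z + k + k = z := by
  rw [add_assoc, ← Nat.cast_add, ← two_mul, ZMod.natCast_self, add_zero]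

theorem add_half_eq_iff {z w : ZMod (2 * k)} : z + k = w ↔ z = w + k := by
  constructor <;> rintro rfl <;> rw [add_half_add_half]

theorem add_half_mem_pair_iff {i q : ZMod (2 * k)} :
    i + k ∈ ({q, q + k} : Finset (ZMod (2 * k))) ↔ i ∈ ({q, q + k} : Finset (ZMod (2 * k))) := by
  simp only [mem_insert, mem_singleton, add_half_eq_iff, add_left_inj]
  tauto

theorem pair_eq_of_mem_pair {p q : ZMod (2 * k)} (h : p ∈ ({q, q + k} : Finset (ZMod (2 * k)))) :
    ({p, p + k} : Finset (ZMod (2 * k))) = {q, q + k} := by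
  simp only [mem_insert, mem_singleton] at h
  rcases h with rfl | rfl
  · rfl
  · rw [add_half_add_half, pair_comm]

variable [NeZero k]

theorem val_cast_half : ((k : ZMod (2 * k))).val = k :=
  ZMod.val_natCast_of_lt (by have := NeZero.pos k; omega)

theorem add_half_ne (z : ZMod (2 * k)) : z + k ≠ z := fun h => by
  have := congrArg ZMod.val (add_eq_left.mp h)
  rw [val_cast_half, ZMod.val_zero] at this
  exact NeZero.ne k this

theorem eq_add_half_of_val_sub_le {p q : ZMod (2 * k)} (hqp : q ≠ p) (h₁ : (q - p).val ≤ k)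
    (h₂ : (p - q).val ≤ k) : q = p + k := by
  have := ZMod.val_sub_add_val_sub hqp.symm
  rw [← sub_eq_iff_eq_add']
  exact ZMod.val_injective _ (by rw [val_cast_half]; omega)

theorem isCover_pair (p : ZMod (2 * k)) : IsCover (2 * k) k {p, p + k} := by
  have hk := NeZero.pos k
  rw [isCover_iff_exists_step hk (by omega)]
  refine ⟨insert_nonempty _ _, fun s hs => ?_⟩
  simp only [mem_insert, mem_singleton] at hs
  rcases hs with rfl | rfl
  · exact ⟨s + k, by simp, add_half_ne s, by rw [add_sub_cancel_left, val_cast_half]⟩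
  · refine ⟨p, by simp, (add_half_ne p).symm, ?_⟩
    rw [show p - (p + k) = (k : ZMod (2 * k)) by
      rw [sub_eq_iff_eq_add, add_comm (k : ZMod (2 * k)), add_half_add_half], val_cast_half]

theorem add_half_notMem_Cseg {p w : ZMod (2 * k)} (hp : p ∈ Cseg (2 * k) k w) :
    p + k ∉ Cseg (2 * k) k w := by
  rw [mem_Cseg_iff (by omega)] at hp ⊢
  have := ZMod.val_add_eq_or (p - w) k
  rw [sub_add_eq_add_sub, val_cast_half] at this
  omega

/-- No window contains two antipodal points, so a window missing `A ∪ B` would contain both `p`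
and `p + k`. -/
theorem isCover_union_of_isCover_insert {A B : Finset (ZMod (2 * k))} {p : ZMod (2 * k)}
    (hA : IsCover (2 * k) k (insert p A)) (hB : IsCover (2 * k) k (insert (p + k) B)) :
    IsCover (2 * k) k (A ∪ B) := by
  intro w
  obtain ⟨l, hl⟩ := hA w
  obtain ⟨l', hl'⟩ := hB w
  simp only [mem_inter, mem_insert] at hl hl'
  rcases hl with ⟨rfl | hlA, hlw⟩
  · rcases hl' with ⟨rfl | hlB, hlw'⟩
    · exact absurd hlw' (add_half_notMem_Cseg hlw)
    · exact ⟨l', by simp [hlB, hlw']⟩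
  · exact ⟨l, by simp [hlA, hlw]⟩

/-- Greedy: from `p`, go to the farthest point `q` within distance `k`, then one step further
to `r`; either `r = p` and `q = p + k`, or `{p, q, r}` is a cover. -/
theorem IsCover.exists_subset_pair_or_card_eq_three {x : Finset (ZMod (2 * k))}
    (hx : IsCover (2 * k) k x) :
    ∃ y ⊆ x, IsCover (2 * k) k y ∧ ((∃ q : ZMod (2 * k), y = {q, q + k}) ∨ y.card = 3) := by
  classical
  have hk := NeZero.pos k
  obtain ⟨⟨p, hp⟩, hstep⟩ := (isCover_iff_exists_step hk (by omega)).mp hx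
  obtain ⟨q, hqQ, hqmax⟩ := exists_max_image {q ∈ x | q ≠ p ∧ (q - p).val ≤ k}
    (fun q => (q - p).val) (by
      obtain ⟨q, hq, hqp, hqk⟩ := hstep p hp
      exact ⟨q, mem_filter.mpr ⟨hq, hqp, hqk⟩⟩)
  obtain ⟨hq, hqp, hqk⟩ := mem_filter.mp hqQ
  obtain ⟨r, hr, hrq, hrk⟩ := hstep q hq
  by_cases hrp : r = p
  · subst hrp
    obtain rfl := eq_add_half_of_val_sub_le hqp hqk hrk
    exact ⟨{r, r + k}, by simp [insert_subset_iff, hp, hq], isCover_pair r, .inl ⟨r, rfl⟩⟩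
  · have hpr : (p - r).val ≤ k := by
      by_contra! hpr
      have hrp' := ZMod.val_sub_add_val_sub hrp
      have hle := hqmax r (mem_filter.mpr ⟨hr, hrp, by omega⟩)
      have := ZMod.val_add_eq_or (r - q) (q - p)
      rw [sub_add_sub_cancel] at this
      have := ZMod.one_le_val_sub hrq
      have := ZMod.one_le_val_sub hrp
      omega
    refine ⟨{p, q, r}, by simp [insert_subset_iff, hp, hq, hr],
      isCover_triple hk (by omega) hqp hrq (Ne.symm hrp) hqk hrk hpr, .inr ?_⟩
    exact card_eq_three.mpr ⟨p, q, r, hqp.symm, Ne.symm hrp, hrq.symm, rfl⟩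

theorem xcov_two_mul (j : ZMod (2 * k)) : xcov (2 * k) k j = {j, j + k} := by
  have hk := NeZero.pos k
  have : (2 * k + k - 1) / k = 2 := by
    rw [show 2 * k + k - 1 = (k - 1) + 2 * k by omega, Nat.add_mul_div_right _ _ hk,
      Nat.div_eq_of_lt (by omega)]
  rw [xcov, this, show range 2 = {0, 1} from rfl]
  simp

end Antipodal

section Facet

variable {k : ℕ} [NeZero k] {a : ZMod (2 * k) → ℤ} {α : ℤ}

theorem IsRoot.eq_pair_or_card_eq_three (hval : IsValid (2 * k) k a α) (hpos : ∀ i, 0 < a i)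
    {x : Finset (ZMod (2 * k))} (hx : IsRoot (2 * k) k a α x) :
    (∃ q : ZMod (2 * k), x = {q, q + k}) ∨ x.card = 3 := by
  obtain ⟨y, hyx, hy, hshape⟩ := hx.1.exists_subset_pair_or_card_eq_three
  rwa [hx.eq_of_subset hval hpos hyx hy] at hshape

theorem IsRoot.card_le_three (hval : IsValid (2 * k) k a α) (hpos : ∀ i, 0 < a i)
    {x : Finset (ZMod (2 * k))} (hx : IsRoot (2 * k) k a α x) : x.card ≤ 3 := by
  rcases hx.eq_pair_or_card_eq_three hval hpos with ⟨q, rfl⟩ | hx3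
  · exact card_le_two.trans (by norm_num)
  · exact hx3.le

/-- Removing `p` and `p + k` from three-element roots through them would leave a cover of weight
at most `2α - (a p + a (p + k)) ≤ α` on four points, which is impossible for a root. -/
theorem not_inTripleRoot_add_half (hval : IsValid (2 * k) k a α) (hpos : ∀ i, 0 < a i)
    {p : ZMod (2 * k)} (hp : InTripleRoot (2 * k) k a α p) :
    ¬ InTripleRoot (2 * k) k a α (p + k) := by
  classical
  rintro ⟨y, hy, hy3, hpy⟩
  obtain ⟨x, hx, hx3, hpx⟩ := hp
  set A := x.erase p
  set B := y.erase (p + k)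
  have hcover : IsCover (2 * k) k (A ∪ B) := isCover_union_of_isCover_insert
    (by rw [insert_erase hpx]; exact hx.1) (by rw [insert_erase hpy]; exact hy.1)
  have hpair := hval _ (isCover_pair p)
  rw [sum_pair (add_half_ne p).symm] at hpair
  have hA := sum_erase_add x a hpx
  have hB := sum_erase_add y a hpy
  have hunion := sum_union_inter (s₁ := A) (s₂ := B) (f := a)
  have hcover_sum := hval _ hcover
  have hdisj : A ∩ B = ∅ := by
    by_contra hne
    have := sum_pos (fun i _ => hpos i) (nonempty_iff_ne_empty.mpr hne)
    linarith [hx.2, hy.2]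
  rw [hdisj, sum_empty] at hunion
  have hroot : IsRoot (2 * k) k a α (A ∪ B) := ⟨hcover, by linarith [hx.2, hy.2]⟩
  have := hroot.card_le_three hval hpos
  rw [card_union_of_disjoint (disjoint_iff_inter_eq_empty.mpr hdisj), card_erase_of_mem hpx,
    card_erase_of_mem hpy, hx3, hy3] at this
  omega

theorem add_add_half_eq_or_inTripleRoot (hpos : ∀ i, 0 < a i) (hfacet : IsFacet (2 * k) k a α)
    (p : ZMod (2 * k)) : a p + a (p + k) = α ∨ InTripleRoot (2 * k) k a α p := by
  obtain ⟨x, hx, hpx⟩ := hfacet.exists_isRoot_mem (by have := NeZero.pos k; omega) hpos p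
  rcases hx.eq_pair_or_card_eq_three hfacet.1 hpos with ⟨q, rfl⟩ | hx3
  · rw [← pair_eq_of_mem_pair hpx] at hx
    exact .inl ((sum_pair (add_half_ne p).symm).symm.trans hx.2)
  · exact .inr ⟨x, hx, hx3, hpx⟩

theorem add_add_half_eq (hpos : ∀ i, 0 < a i) (hfacet : IsFacet (2 * k) k a α)
    (p : ZMod (2 * k)) : a p + a (p + k) = α := by
  rcases add_add_half_eq_or_inTripleRoot hpos hfacet p with h | hp
  · exact h
  rcases add_add_half_eq_or_inTripleRoot hpos hfacet (p + k) with h | hpk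
  · rwa [add_half_add_half, add_comm] at h
  · exact absurd hpk (not_inTripleRoot_add_half hfacet.1 hpos hp)

theorem inTripleRoot_or_inTripleRoot_add_half (hpos : ∀ i, 0 < a i)
    (hfacet : IsFacet (2 * k) k a α) (i : ZMod (2 * k)) :
    InTripleRoot (2 * k) k a α i ∨ InTripleRoot (2 * k) k a α (i + k) := by
  classical
  by_contra! h
  obtain ⟨hi, hik⟩ := h
  have := congrFun (hfacet.eq_zero_of_forall_isRoot_sum_eq_zero (by have := NeZero.pos k; omega)
    hpos (c := fun j => (if j = i then 1 else 0) - if j = i + k then 1 else 0) fun x hx => ?_) i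
  · simp [(add_half_ne i).symm] at this
  · rw [sum_sub_distrib, sum_ite_eq', sum_ite_eq']
    rcases hx.eq_pair_or_card_eq_three hfacet.1 hpos with ⟨q, rfl⟩ | hx3
    · simp only [add_half_mem_pair_iff, sub_self]
    · rw [if_neg fun h => hi ⟨x, hx, hx3, h⟩, if_neg fun h => hik ⟨x, hx, hx3, h⟩, sub_self]

theorem three_mul_eq_of_inTripleRoot (hpos : ∀ i, 0 < a i) (hfacet : IsFacet (2 * k) k a α)
    {i : ZMod (2 * k)} (hi : InTripleRoot (2 * k) k a α i) : 3 * a i = α := by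
  classical
  have := congrFun (hfacet.eq_zero_of_forall_isRoot_sum_eq_zero (by have := NeZero.pos k; omega)
    hpos (c := fun j => 3 * a j - if InTripleRoot (2 * k) k a α j then α else 2 * α)
    fun x hx => ?_) i
  · simpa [hi, sub_eq_zero] using this
  · rcases hx.eq_pair_or_card_eq_three hfacet.1 hpos with ⟨q, rfl⟩ | hx3
    · have hq := add_add_half_eq hpos hfacet q
      rw [sum_pair (add_half_ne q).symm]
      rcases inTripleRoot_or_inTripleRoot_add_half hpos hfacet q with hq' | hqk
      · rw [if_pos hq', if_neg (not_inTripleRoot_add_half hfacet.1 hpos hq')]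
        linarith
      · rw [if_pos hqk, if_neg fun h => not_inTripleRoot_add_half hfacet.1 hpos h hqk]
        linarith
    · rw [sum_congr rfl fun j hj => by rw [if_pos ⟨x, hx, hx3, hj⟩], sum_sub_distrib, ← mul_sum,
        hx.2, sum_const, hx3, nsmul_eq_mul]
      push_cast
      ring

/-- If `m` were the only point of a window lying in a three-element root, then every such root
would contain `m` but not `m + k`, and the sums of `α (e_m - e_{m+k}) + 2a - α` over all roots
would vanish, forcing `a m = 0`. -/
theorem exists_two_inTripleRoot_mem_Cseg (hpos : ∀ i, 0 < a i) (hfacet : IsFacet (2 * k) k a α)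
    (j : ZMod (2 * k)) : ∃ l ∈ Cseg (2 * k) k j, ∃ l' ∈ Cseg (2 * k) k j, l ≠ l' ∧
      InTripleRoot (2 * k) k a α l ∧ InTripleRoot (2 * k) k a α l' := by
  classical
  by_contra! h
  obtain ⟨-, x₀, hx₀, hx₀3, -⟩ : ∃ i, InTripleRoot (2 * k) k a α i :=
    (inTripleRoot_or_inTripleRoot_add_half hpos hfacet 0).elim (⟨_, ·⟩) (⟨_, ·⟩)
  obtain ⟨m, hm⟩ := hx₀.1 j
  rw [mem_inter] at hm
  have hmN : InTripleRoot (2 * k) k a α m := ⟨x₀, hx₀, hx₀3, hm.1⟩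
  have honly : ∀ l ∈ Cseg (2 * k) k j, InTripleRoot (2 * k) k a α l → l = m :=
    fun l hl hlN => by_contra fun hlm => h l hl m hm.2 hlm hlN hmN
  have hmk := not_inTripleRoot_add_half hfacet.1 hpos hmN
  have := congrFun (hfacet.eq_zero_of_forall_isRoot_sum_eq_zero (by have := NeZero.pos k; omega)
    hpos (c := fun i => (if i = m then α else 0) - (if i = m + k then α else 0) + 2 * a i - α)
    fun x hx => ?_) m
  · simp only [↓reduceIte, if_neg (add_half_ne m).symm, Pi.zero_apply] at this
    linarith [hpos m]
  · rw [sum_sub_distrib, sum_add_distrib, sum_sub_distrib, sum_ite_eq', sum_ite_eq', ← mul_sum,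
      hx.2, sum_const, nsmul_eq_mul]
    rcases hx.eq_pair_or_card_eq_three hfacet.1 hpos with ⟨q, rfl⟩ | hx3
    · simp only [add_half_mem_pair_iff, card_pair (add_half_ne q).symm]
      push_cast
      ring
    · rw [if_pos (mem_of_forall_inTripleRoot_mem_Cseg honly hx hx3),
        if_neg fun h => hmk ⟨x, hx, hx3, h⟩, hx3]
      push_cast
      ring

end Facet

theorem stmt13_general (k : ℕ) (hk : 3 ≤ k)
    (a : ZMod (2 * k) → ℤ) (α : ℤ) (hpos : ∀ i : ZMod (2 * k), 1 ≤ a i)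
    (hfacet : IsFacet (2 * k) k a α) :
    ∃ a0 : ℤ, 1 ≤ a0 ∧ ∃ W : Finset (ZMod (2 * k)),
      (∀ j : ZMod (2 * k), (W ∩ xcov (2 * k) k j).card = 1) ∧
      (∀ j : ZMod (2 * k), 2 ≤ ((Cseg (2 * k) k j).filter (fun l => l ∉ W)).card) ∧
      (∀ i : ZMod (2 * k), a i = if i ∈ W then 2 * a0 else a0) ∧
      α = 3 * a0 := by
  classical
  have : NeZero k := ⟨by omega⟩
  set N := InTripleRoot (2 * k) k a α
  have hexcl : ∀ i, N i → ¬ N (i + k) := fun _ => not_inTripleRoot_add_half hfacet.1 hpos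
  have hor := inTripleRoot_or_inTripleRoot_add_half hpos hfacet
  have hthird : ∀ i, N i → 3 * a i = α := fun _ => three_mul_eq_of_inTripleRoot hpos hfacet
  obtain ⟨m, hm⟩ : ∃ m, N m := (hor 0).elim (⟨_, ·⟩) (⟨_, ·⟩)
  refine ⟨a m, hpos m, univ.filter (¬ N ·), fun j => ?_, fun j => ?_, fun i => ?_,
    (hthird m hm).symm⟩
  · rw [xcov_two_mul, card_eq_one]
    rcases hor j with hj | hjk
    · exact ⟨j + k, by ext i; grind⟩
    · exact ⟨j, by ext i; grind⟩
  · obtain ⟨l, hl, l', hl', hll', hlN, hl'N⟩ := exists_two_inTripleRoot_mem_Cseg hpos hfacet j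
    exact one_lt_card.mpr ⟨l, by simpa [hl] using hlN, l', by simpa [hl'] using hl'N, hll'⟩
  · by_cases hi : N i
    · simp only [mem_filter, mem_univ, hi, not_true_eq_false, and_false, if_false]
      linarith [hthird i hi, hthird m hm]
    · simp only [mem_filter, mem_univ, hi, not_false_eq_true, and_self, if_true]
      linarith [add_add_half_eq hpos hfacet i, hthird _ ((hor i).resolve_left hi), hthird m hm]

theorem stmt13 (k : ℕ) (hk : 3 ≤ k)
    (a : ZMod (2 * k) → ℤ) (α : ℤ) (hpos : ∀ i : ZMod (2 * k), 1 ≤ a i)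
    (hfacet : IsFacet (2 * k) k a α)
    (hnonbool : ¬ IsBooleanMultiple (2 * k) k a α) :
    ∃ a0 : ℤ, 1 ≤ a0 ∧ ∃ W : Finset (ZMod (2 * k)),
      (∀ j : ZMod (2 * k), (W ∩ xcov (2 * k) k j).card = 1) ∧
      (∀ j : ZMod (2 * k), 2 ≤ ((Cseg (2 * k) k j).filter (fun l => l ∉ W)).card) ∧
      (∀ i : ZMod (2 * k), a i = if i ∈ W then 2 * a0 else a0) ∧
      α = 3 * a0 :=
  stmt13_general k hk a α hpos hfacet
end

section
/- Let k ≥ 3 be an integer and let W ⊆ Z_{2k}, with W̄ = Z_{2k} ∖ W, be such that for every i ∈ Z_{2k} one has x^i ∩ W ≠ ∅ and |C^i ∩ W̄| ≥ 2. Then there exists a cover x̃ of C_{2k}^k with |x̃| = 3 and x̃ ⊆ W̄. -/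
section Aux

lemma mem_Cseg' {k : ℕ} (hk : 1 ≤ k) {i j : ZMod (2*k)} :
    j ∈ Cseg (2*k) k i ↔ (j - i).val < k := by
  haveI : NeZero (2*k) := ⟨by omega⟩
  constructor
  · intro hj
    simp only [Cseg, Finset.mem_image, Finset.mem_range] at hj
    obtain ⟨h, hh, rfl⟩ := hj
    rw [add_sub_cancel_left, ZMod.val_natCast_of_lt (by omega)]
    exact hh
  · intro hj
    simp only [Cseg, Finset.mem_image, Finset.mem_range]
    exact ⟨(j - i).val, hj, by rw [ZMod.natCast_rightInverse (j - i)]; ring⟩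

lemma val_sub_cast' {n p q : ℕ} [NeZero n] (hpq : p ≤ q) (hq : q < n) :
    ((q : ZMod n) - (p : ZMod n)).val = q - p := by
  rw [← Nat.cast_sub hpq, ZMod.val_natCast_of_lt (by omega)]

end Aux

theorem stmt14 (k : ℕ) (hk : 3 ≤ k)
    (W : Finset (ZMod (2 * k)))
    (h1 : ∀ i : ZMod (2 * k), (xcov (2 * k) k i ∩ W).Nonempty)
    (h2 : ∀ i : ZMod (2 * k), 2 ≤ ((Cseg (2 * k) k i).filter (fun l => l ∉ W)).card) :
    ∃ x : Finset (ZMod (2 * k)), IsCover (2 * k) k x ∧ x.card = 3 ∧ ∀ i ∈ x, i ∉ W := by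
  haveI : NeZero (2*k) := ⟨by omega⟩
  have hk1 : 1 ≤ k := by omega
  -- antipodality: if i ∉ W then i + k ∈ W
  have hA : ∀ i : ZMod (2*k), i ∉ W → i + (k : ZMod (2*k)) ∈ W := by
    intro i hi
    obtain ⟨e, he⟩ := h1 i
    rw [Finset.mem_inter] at he
    obtain ⟨he1, he2⟩ := he
    simp only [xcov, Finset.mem_image, Finset.mem_range] at he1
    have hdiv : (2*k + k - 1)/k = 2 :=
      Nat.div_eq_of_lt_le (by omega) (by omega)
    rw [hdiv] at he1
    obtain ⟨h, hh, rfl⟩ := he1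
    rcases (by omega : h = 0 ∨ h = 1) with rfl | rfl
    · exfalso; apply hi; simpa using he2
    · simpa using he2
  -- window step: from any a ∉ W, find next element of the complement within distance k-1
  have hB : ∀ a : ZMod (2*k), a ∉ W → ∃ g : ℕ, 1 ≤ g ∧ g < k ∧ a + (g : ZMod (2*k)) ∉ W := by
    intro a ha
    have h2' := h2 (a + 1)
    obtain ⟨e, he⟩ := Finset.card_pos.mp (lt_of_lt_of_le two_pos h2')
    rw [Finset.mem_filter] at he
    obtain ⟨he1, he2⟩ := he
    rw [mem_Cseg' hk1] at he1
    set t := (e - (a+1)).val with ht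
    have het : e = a + 1 + (t : ZMod (2*k)) := by
      rw [ht, ZMod.natCast_rightInverse]; ring
    have hg : e = a + ((t+1 : ℕ) : ZMod (2*k)) := by
      push_cast; rw [het]; ring
    refine ⟨t+1, by omega, ?_, by rw [← hg]; exact he2⟩
    by_contra hcon
    have htk : (t+1 : ℕ) = k := by omega
    have : e = a + (k : ZMod (2*k)) := by rw [hg, htk]
    exact he2 (this ▸ hA a ha)
  -- pick a starting element a ∉ W
  obtain ⟨a, haf⟩ := Finset.card_pos.mp (lt_of_lt_of_le two_pos (h2 0))
  rw [Finset.mem_filter] at haf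
  have ha : a ∉ W := haf.2
  -- the set of admissible offsets from a, and its maximum g1
  have hTne : ((Finset.range k).filter
      (fun g : ℕ => 1 ≤ g ∧ a + (g : ZMod (2*k)) ∉ W)).Nonempty := by
    obtain ⟨g0, hg01, hg0k, hg0W⟩ := hB a ha
    exact ⟨g0, by rw [Finset.mem_filter, Finset.mem_range]; exact ⟨hg0k, hg01, hg0W⟩⟩
  obtain ⟨g1, hg1mem, hg1max⟩ :
      ∃ g1 ∈ (Finset.range k).filter (fun g : ℕ => 1 ≤ g ∧ a + (g : ZMod (2*k)) ∉ W),
        ∀ g ∈ (Finset.range k).filter (fun g : ℕ => 1 ≤ g ∧ a + (g : ZMod (2*k)) ∉ W), g ≤ g1 :=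
    ⟨_, Finset.max'_mem _ hTne, fun g hg => Finset.le_max' _ g hg⟩
  rw [Finset.mem_filter, Finset.mem_range] at hg1mem
  obtain ⟨hg1k, hg11, hbW⟩ := hg1mem
  set b := a + ((g1 : ℕ) : ZMod (2*k)) with hb
  obtain ⟨g2, hg21, hg2k, hcW⟩ := hB b hbW
  set c := b + ((g2 : ℕ) : ZMod (2*k)) with hc
  have hca : c = a + ((g1 + g2 : ℕ) : ZMod (2*k)) := by
    rw [hc, hb]; push_cast; ring
  have hsum : k ≤ g1 + g2 := by
    by_contra hcon
    push_neg at hcon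
    have := hg1max (g1 + g2) (by
      rw [Finset.mem_filter, Finset.mem_range]
      exact ⟨by omega, by omega, by rw [← hca]; exact hcW⟩)
    omega
  -- distinctness
  have hab : a ≠ b := by
    intro h
    have h0 : ((g1 : ℕ) : ZMod (2*k)) = 0 := by
      have := h; rw [hb] at this; exact (left_eq_add.mp this)
    have := ZMod.val_natCast_of_lt (by omega : g1 < 2*k)
    rw [h0, ZMod.val_zero] at this
    omega
  have hbc : b ≠ c := by
    intro h
    have h0 : ((g2 : ℕ) : ZMod (2*k)) = 0 := by
      have := h; rw [hc] at this; exact (left_eq_add.mp this)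
    have := ZMod.val_natCast_of_lt (by omega : g2 < 2*k)
    rw [h0, ZMod.val_zero] at this
    omega
  have hac : a ≠ c := by
    intro h
    have h0 : ((g1 + g2 : ℕ) : ZMod (2*k)) = 0 := by
      have := h; rw [hca] at this; exact (left_eq_add.mp this)
    have := ZMod.val_natCast_of_lt (by omega : g1 + g2 < 2*k)
    rw [h0, ZMod.val_zero] at this
    omega
  refine ⟨{a, b, c}, ?_, ?_, ?_⟩
  · -- cover
    intro i
    set u := (i - a).val with hu
    have hu2k : u < 2*k := ZMod.val_lt _
    have hia : i = a + (u : ZMod (2*k)) := by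
      rw [hu, ZMod.natCast_rightInverse]; ring
    rcases (by omega : u ≤ g1 ∨ (g1 < u ∧ u ≤ g1 + g2) ∨ g1 + g2 < u) with h | h | h
    · refine ⟨b, Finset.mem_inter.mpr ⟨by simp, (mem_Cseg' hk1).mpr ?_⟩⟩
      have hbi : b - i = ((g1 : ℕ) : ZMod (2*k)) - ((u : ℕ) : ZMod (2*k)) := by
        rw [hb, hia]; ring
      rw [hbi, val_sub_cast' h (by omega)]
      omega
    · refine ⟨c, Finset.mem_inter.mpr ⟨by simp, (mem_Cseg' hk1).mpr ?_⟩⟩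
      have hci : c - i = ((g1 + g2 : ℕ) : ZMod (2*k)) - ((u : ℕ) : ZMod (2*k)) := by
        rw [hca, hia]; ring
      rw [hci, val_sub_cast' h.2 (by omega)]
      omega
    · refine ⟨a, Finset.mem_inter.mpr ⟨by simp, (mem_Cseg' hk1).mpr ?_⟩⟩
      have hai : a - i = ((2*k - u : ℕ) : ZMod (2*k)) := by
        have h0 : ((2*k : ℕ) : ZMod (2*k)) = 0 := ZMod.natCast_self _
        rw [Nat.cast_sub (le_of_lt hu2k), hia, h0]
        ring
      rw [hai, ZMod.val_natCast_of_lt (by omega)]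
      omega
  · -- card
    rw [Finset.card_insert_of_notMem (by simp [hab, hac]),
        Finset.card_insert_of_notMem (by simp [hbc]), Finset.card_singleton]
  · -- outside W
    intro i hi
    simp only [Finset.mem_insert, Finset.mem_singleton] at hi
    rcases hi with rfl | rfl | rfl
    · exact ha
    · exact hbW
    · exact hcW
end

section
/- Let k ≥ 3, let W ∈ 𝒲 and let i ∈ W̄ be such that W̄ ∩ [i+2k, i+2k+ω(i)]_{3k} ≠ ∅. Then there exists a cover x̃ of C_{3k}^k with |x̃| = 4 and x̃ ∩ W = ∅. -/
/-- The family `𝒲` of subsets `W ⊆ ℤ_{3k}` with `|x^i ∩ W| ≥ 1` and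
`|C^i ∩ W̄| ≥ 2` for every `i`. -/
def inFamilyW (k : ℕ) (W : Finset (ZMod (3 * k))) : Prop :=
  ∀ i : ZMod (3 * k), (xcov (3 * k) k i ∩ W).Nonempty ∧
    2 ≤ ((Cseg (3 * k) k i).filter (fun l => l ∉ W)).card

/-- `ω(i) = min {t ≥ 0 : i + k + t ∈ W̄}`. -/
noncomputable def omegaW (k : ℕ) (W : Finset (ZMod (3 * k))) (i : ZMod (3 * k)) : ℕ :=
  sInf {t : ℕ | i + ((k : ℕ) : ZMod (3 * k)) + (t : ZMod (3 * k)) ∉ W}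

/-- The sequence `r^i`: `r^i_0 = i`, `r^i_{t+1} = r^i_t + k + ω(r^i_t)`. -/
noncomputable def rseqW (k : ℕ) (W : Finset (ZMod (3 * k))) (i : ZMod (3 * k)) :
    ℕ → ZMod (3 * k)
  | 0 => i
  | t + 1 => rseqW k W i t + ((k : ℕ) : ZMod (3 * k))
      + ((omegaW k W (rseqW k W i t) : ℕ) : ZMod (3 * k))

/-- `p^i = max {t ≥ 0 : ∑_{j=0}^{t−1} ω(r^i_j) ≤ k−1}`. -/
noncomputable def pW (k : ℕ) (W : Finset (ZMod (3 * k))) (i : ZMod (3 * k)) : ℕ :=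
  sSup {t : ℕ | ∑ j ∈ Finset.range t, omegaW k W (rseqW k W i j) ≤ k - 1}

/-- The family `𝒲*`: those `W ∈ 𝒲` with `|x^i ∩ W| ≥ 2` for every `i` and
`[i+2k, i+2k+ω(i)]_{3k} ⊆ W` for every `i ∈ W̄`. -/
noncomputable def inFamilyWstar (k : ℕ) (W : Finset (ZMod (3 * k))) : Prop :=
  inFamilyW k W ∧
  (∀ i : ZMod (3 * k), 2 ≤ (xcov (3 * k) k i ∩ W).card) ∧
  (∀ i : ZMod (3 * k), i ∉ W →
    cycInterval (3 * k) (i + ((2 * k : ℕ) : ZMod (3 * k)))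
      (i + ((2 * k : ℕ) : ZMod (3 * k)) + ((omegaW k W i : ℕ) : ZMod (3 * k))) ⊆ W)

lemma mem_Cseg'_s15 {n k : ℕ} {j x : ZMod n} :
    x ∈ Cseg n k j ↔ ∃ h < k, x = j + (h : ZMod n) := by
  simp [Cseg, Finset.mem_image, eq_comm]

lemma natCast_inj_lt {n a b : ℕ} (hn : 0 < n) (ha : a < n) (hb : b < n)
    (h : (a : ZMod n) = b) : a = b := by
  haveI : NeZero n := ⟨hn.ne'⟩
  have := congrArg ZMod.val h
  rwa [ZMod.val_natCast_of_lt ha, ZMod.val_natCast_of_lt hb] at this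

lemma zmod_self_eq {n : ℕ} (hn : 0 < n) (x : ZMod n) : x = ((x.val : ℕ) : ZMod n) := by
  haveI : NeZero n := ⟨hn.ne'⟩
  simp [ZMod.natCast_val, ZMod.cast_id]

lemma cover_four {n k : ℕ} (hk : 0 < k) (hn : 0 < n) (i : ZMod n) (c1 c2 c3 : ℕ)
    (o1 : c1 ≤ c2) (o2 : c2 ≤ c3) (o3 : c3 < n)
    (g1 : c1 ≤ k) (g2 : c2 ≤ c1 + k) (g3 : c3 ≤ c2 + k) (g4 : n ≤ c3 + k) :
    IsCover n k {i, i + (c1 : ZMod n), i + (c2 : ZMod n), i + (c3 : ZMod n)} := by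
  haveI : NeZero n := ⟨hn.ne'⟩
  intro j
  set e : ℕ := (j - i).val with he
  have hj : j = i + (e : ZMod n) := by
    rw [← zmod_self_eq hn (j - i)]; ring
  have hen : e < n := ZMod.val_lt _
  rcases Nat.eq_zero_or_pos e with h0 | hpos
  · refine ⟨i, Finset.mem_inter.2 ⟨by simp, mem_Cseg'_s15.2 ⟨0, hk, ?_⟩⟩⟩
    rw [hj, h0]; push_cast; ring
  have key : ∀ c : ℕ, e ≤ c → c ≤ e + k - 1 →
      i + (c : ZMod n) ∈ Cseg n k j := by
    intro c hec hck
    refine mem_Cseg'_s15.2 ⟨c - e, by omega, ?_⟩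
    rw [hj, add_assoc, ← Nat.cast_add, Nat.add_sub_cancel' hec]
  by_cases h1 : e ≤ c1
  · exact ⟨i + (c1 : ZMod n), Finset.mem_inter.2 ⟨by simp, key c1 h1 (by omega)⟩⟩
  · by_cases h2 : e ≤ c2
    · exact ⟨i + (c2 : ZMod n), Finset.mem_inter.2 ⟨by simp, key c2 h2 (by omega)⟩⟩
    · by_cases h3 : e ≤ c3
      · exact ⟨i + (c3 : ZMod n), Finset.mem_inter.2 ⟨by simp, key c3 h3 (by omega)⟩⟩
      · -- wrap-around: h = n - e, j + h = i
        refine ⟨i, Finset.mem_inter.2 ⟨by simp, mem_Cseg'_s15.2 ⟨n - e, by omega, ?_⟩⟩⟩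
        rw [hj, add_assoc, ← Nat.cast_add, Nat.add_sub_cancel' hen.le, ZMod.natCast_self,
          add_zero]

theorem stmt15 (k : ℕ) (hk : 3 ≤ k)
    (W : Finset (ZMod (3 * k))) (hW : inFamilyW k W)
    (i : ZMod (3 * k)) (hi : i ∉ W)
    (hint : ∃ l ∈ cycInterval (3 * k) (i + ((2 * k : ℕ) : ZMod (3 * k)))
        (i + ((2 * k : ℕ) : ZMod (3 * k)) + ((omegaW k W i : ℕ) : ZMod (3 * k))), l ∉ W) :
    ∃ x : Finset (ZMod (3 * k)), IsCover (3 * k) k x ∧ x.card = 4 ∧ ∀ j ∈ x, j ∉ W := by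
  have hn : 0 < 3 * k := by omega
  haveI : NeZero (3 * k) := ⟨hn.ne'⟩
  set S : Set ℕ := {t : ℕ | i + ((k : ℕ) : ZMod (3 * k)) + (t : ZMod (3 * k)) ∉ W} with hS
  -- S is nonempty with an element < k
  obtain ⟨m', hm'⟩ : (((Cseg (3*k) k (i + ((k:ℕ) : ZMod (3*k)))).filter
      (fun l => l ∉ W))).Nonempty := by
    have := (hW (i + ((k:ℕ) : ZMod (3*k)))).2
    exact Finset.card_pos.1 (by omega)
  rw [Finset.mem_filter] at hm'
  obtain ⟨t0, ht0k, ht0⟩ := mem_Cseg'_s15.1 hm'.1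
  have ht0S : t0 ∈ S := by rw [hS]; simpa [← ht0] using hm'.2
  have hSne : S.Nonempty := ⟨t0, ht0S⟩
  set ω := omegaW k W i with hωdef
  have hωS : ω ∈ S := Nat.sInf_mem hSne
  have hωW : i + ((k + ω : ℕ) : ZMod (3 * k)) ∉ W := by
    rw [hS] at hωS; push_cast; rw [← add_assoc]; exact hωS
  have hωlt : ω < k := lt_of_le_of_lt (Nat.sInf_le ht0S) ht0k
  have hmin : ∀ u, u < ω → i + ((k + u : ℕ) : ZMod (3 * k)) ∈ W := by
    intro u hu
    have := Nat.notMem_of_lt_sInf (s := S) hu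
    rw [hS] at this
    simp only [Set.mem_setOf_eq, not_not] at this
    push_cast; rw [← add_assoc]; exact this
  -- extract l = i + 2k + s with s ≤ ω
  obtain ⟨l, hlmem, hlW⟩ := hint
  rw [cycInterval] at hlmem
  have hsub : (i + ((2 * k : ℕ) : ZMod (3 * k)) + ((ω : ℕ) : ZMod (3 * k)))
      - (i + ((2 * k : ℕ) : ZMod (3 * k))) = ((ω : ℕ) : ZMod (3 * k)) := by ring
  rw [hsub, ZMod.val_natCast_of_lt (by omega)] at hlmem
  simp only [Finset.mem_image, Finset.mem_range] at hlmem
  obtain ⟨s, hsω, hls⟩ := hlmem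
  have hsω' : s ≤ ω := by omega
  have hlW' : i + ((2 * k + s : ℕ) : ZMod (3 * k)) ∉ W := by
    have heq : i + ((2 * k + s : ℕ) : ZMod (3 * k)) = l := by rw [← hls]; push_cast; ring
    rw [heq]; exact hlW
  -- find m = i + d with ω + 1 ≤ d ≤ k, m ∉ W
  obtain ⟨m, hmF, hmne⟩ := Finset.exists_mem_ne
    (s := (Cseg (3*k) k (i + ((ω+1 : ℕ) : ZMod (3*k)))).filter (fun l => l ∉ W))
    (by have := (hW (i + ((ω+1:ℕ) : ZMod (3*k)))).2; omega)
    (i + ((k + ω : ℕ) : ZMod (3 * k)))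
  rw [Finset.mem_filter] at hmF
  obtain ⟨t1, ht1k, ht1⟩ := mem_Cseg'_s15.1 hmF.1
  obtain ⟨d, hd⟩ : ∃ d, d = ω + 1 + t1 := ⟨_, rfl⟩
  have hmd : m = i + ((d : ℕ) : ZMod (3 * k)) := by
    rw [ht1, hd]; push_cast; ring
  have hmW : i + ((d : ℕ) : ZMod (3 * k)) ∉ W := hmd ▸ hmF.2
  have hdk : d ≤ k := by
    by_contra hdk
    push_neg at hdk
    set u := d - k with hu
    have hdu : d = k + u := by omega
    rcases eq_or_lt_of_le (show u ≤ ω by omega) with h | h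
    · exact hmne (by rw [hmd, hdu, h])
    · exact hmW (by rw [hdu] at hmW ⊢; exact absurd (hmin u h) hmW)
  -- collision case: d = k + ω forces ω = 0, contradiction with hW i
  by_cases hcol : d = k + ω
  · exfalso
    have hω0 : ω = 0 := by omega
    have hs0 : s = 0 := by omega
    obtain ⟨w, hw⟩ := (hW i).1
    rw [Finset.mem_inter, xcov] at hw
    have hdiv : (3 * k + k - 1) / k = 3 := Nat.div_eq_of_lt_le (by omega) (by omega)
    rw [hdiv] at hw
    have hwW := hw.2
    obtain ⟨h, hh3, hhw⟩ := Finset.mem_image.1 hw.1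
    rw [Finset.mem_range] at hh3
    rw [← hhw] at hwW
    interval_cases h
    · exact hi (by simpa using hwW)
    · have h' := hωW
      rw [hω0, Nat.add_zero] at h'
      exact h' (by simpa using hwW)
    · have h' := hlW'
      rw [hs0, Nat.add_zero] at h'
      exact h' (by simpa using hwW)
  -- main case: four distinct points
  have hdlt : d < k + ω := lt_of_le_of_ne (by omega) hcol
  have hne : ∀ a b : ℕ, a < 3*k → b < 3*k → a ≠ b →
      i + (a : ZMod (3*k)) ≠ i + (b : ZMod (3*k)) := by
    intro a b ha hb hab h
    exact hab (natCast_inj_lt hn ha hb (add_left_cancel h))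
  have h12 : i ≠ i + ((d:ℕ) : ZMod (3*k)) := by
    simpa using hne 0 d (by omega) (by omega) (by omega)
  have h13 : i ≠ i + ((k + ω :ℕ) : ZMod (3*k)) := by
    simpa using hne 0 (k+ω) (by omega) (by omega) (by omega)
  have h14 : i ≠ i + ((2*k + s :ℕ) : ZMod (3*k)) := by
    simpa using hne 0 (2*k+s) (by omega) (by omega) (by omega)
  have h23 : i + ((d:ℕ) : ZMod (3*k)) ≠ i + ((k + ω :ℕ) : ZMod (3*k)) :=
    hne d (k+ω) (by omega) (by omega) (by omega)
  have h24 : i + ((d:ℕ) : ZMod (3*k)) ≠ i + ((2*k + s :ℕ) : ZMod (3*k)) :=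
    hne d (2*k+s) (by omega) (by omega) (by omega)
  have h34 : i + ((k+ω:ℕ) : ZMod (3*k)) ≠ i + ((2*k + s :ℕ) : ZMod (3*k)) :=
    hne (k+ω) (2*k+s) (by omega) (by omega) (by omega)
  refine ⟨{i, i + ((d:ℕ) : ZMod (3*k)), i + ((k+ω:ℕ) : ZMod (3*k)),
      i + ((2*k+s:ℕ) : ZMod (3*k))}, ?_, ?_, ?_⟩
  · exact cover_four (by omega) hn i d (k+ω) (2*k+s) (by omega) (by omega) (by omega)
      (by omega) (by omega) (by omega) (by omega)
  · rw [Finset.card_insert_of_notMem (by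
        simp only [Finset.mem_insert, Finset.mem_singleton]; push_neg
        exact ⟨h12, h13, h14⟩),
      Finset.card_insert_of_notMem (by
        simp only [Finset.mem_insert, Finset.mem_singleton]; push_neg
        exact ⟨h23, h24⟩),
      Finset.card_insert_of_notMem (by
        simpa only [Finset.mem_singleton] using h34), Finset.card_singleton]
  · intro j hj
    simp only [Finset.mem_insert, Finset.mem_singleton] at hj
    rcases hj with rfl | rfl | rfl | rfl
    · exact hi
    · exact hmW
    · exact hωW
    · exact hlW'
end

section
/- Let k ≥ 3 and let W ∈ 𝒲 be such that |W ∩ x^j| = 1 for some j ∈ Z_{3k}. Then there exists a cover x̃ of C_{3k}^k with |x̃| = 4 and x̃ ⊆ W̄. -/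
lemma castEqMod {n a b : ℕ} (hn : 0 < n) (hab : a ≤ b) (h : b - a < n)
    (he : (a : ZMod n) = (b : ZMod n)) : a = b := by
  have h0 : ((b - a : ℕ) : ZMod n) = 0 := by
    rw [Nat.cast_sub hab, ← he, sub_self]
  have hd := (ZMod.natCast_eq_zero_iff _ _).1 h0
  rcases Nat.eq_zero_or_pos (b - a) with h' | h'
  · omega
  · have := Nat.le_of_dvd h' hd
    omega

lemma castEq {n a b : ℕ} (hn : 0 < n) (ha : a < n) (hb : b < n)
    (h : (a : ZMod n) = (b : ZMod n)) : a = b := by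
  rcases le_total a b with hab | hab
  · exact castEqMod hn hab (by omega) h
  · exact (castEqMod hn hab (by omega) h.symm).symm

lemma windowTwo (k : ℕ) (W : Finset (ZMod (3 * k))) (hW : inFamilyW k W)
    (u : ZMod (3 * k)) (a : ℕ) :
    2 ≤ ((Finset.range k).filter
      (fun h => u + ((a + h : ℕ) : ZMod (3 * k)) ∉ W)).card := by
  have h2 := (hW (u + ((a : ℕ) : ZMod (3 * k)))).2
  rw [Cseg, Finset.filter_image] at h2
  refine le_trans (le_trans h2 Finset.card_image_le) (le_of_eq ?_)
  congr 1
  apply Finset.filter_congr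
  intro h _
  have he : u + ((a : ℕ) : ZMod (3 * k)) + ((h : ℕ) : ZMod (3 * k))
      = u + ((a + h : ℕ) : ZMod (3 * k)) := by push_cast; ring
  rw [he]

lemma coverFour (k : ℕ) (hk : 3 ≤ k) (u : ZMod (3 * k)) (c d : ℕ)
    (hc1 : k + 1 ≤ c) (hc2 : c ≤ 2 * k) (hd1 : 2 * k + 1 ≤ d) (hd2 : d < 3 * k)
    (hdc : d ≤ c + k) :
    IsCover (3 * k) k {u, u + ((k : ℕ) : ZMod (3 * k)), u + ((c : ℕ) : ZMod (3 * k)),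
      u + ((d : ℕ) : ZMod (3 * k))} := by
  haveI : NeZero (3 * k) := ⟨by omega⟩
  intro i
  set m := (i - u).val with hm_def
  have hm : m < 3 * k := ZMod.val_lt _
  have hi : i = u + ((m : ℕ) : ZMod (3 * k)) := by
    rw [hm_def, ZMod.natCast_val, ZMod.cast_id]; ring
  have key : ∃ o h : ℕ, (o = 0 ∨ o = k ∨ o = c ∨ o = d) ∧ h < k ∧
      (m + h = o ∨ m + h = o + 3 * k) := by
    rcases (by omega : m = 0 ∨ (1 ≤ m ∧ m ≤ k) ∨ (k + 1 ≤ m ∧ m ≤ c) ∨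
        (c + 1 ≤ m ∧ m ≤ d) ∨ (d + 1 ≤ m ∧ m < 3 * k)) with h | h | h | h | h
    · exact ⟨0, 0, by omega, by omega, by omega⟩
    · exact ⟨k, k - m, by omega, by omega, by omega⟩
    · exact ⟨c, c - m, by omega, by omega, by omega⟩
    · exact ⟨d, d - m, by omega, by omega, by omega⟩
    · exact ⟨0, 3 * k - m, by omega, by omega, by omega⟩
  obtain ⟨o, h, ho, hh, hmh⟩ := key
  refine ⟨u + ((o : ℕ) : ZMod (3 * k)), Finset.mem_inter.2 ⟨?_, ?_⟩⟩
  · rcases ho with rfl | rfl | rfl | rfl <;> simp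
  · rw [Cseg]
    refine Finset.mem_image.2 ⟨h, Finset.mem_range.2 hh, ?_⟩
    rw [hi]
    have he : ((m : ℕ) : ZMod (3 * k)) + ((h : ℕ) : ZMod (3 * k))
        = ((o : ℕ) : ZMod (3 * k)) := by
      rcases hmh with he | he
      · rw [← Nat.cast_add, he]
      · rw [← Nat.cast_add, he, Nat.cast_add, ZMod.natCast_self, add_zero]
    rw [add_assoc, he]

lemma cardFour (k : ℕ) (hk : 3 ≤ k) (u : ZMod (3 * k)) (c d : ℕ)
    (hc1 : k + 1 ≤ c) (hc2 : c ≤ 2 * k) (hd1 : 2 * k + 1 ≤ d) (hd2 : d < 3 * k) :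
    ({u, u + ((k : ℕ) : ZMod (3 * k)), u + ((c : ℕ) : ZMod (3 * k)),
      u + ((d : ℕ) : ZMod (3 * k))} : Finset (ZMod (3 * k))).card = 4 := by
  have hne : ∀ a b : ℕ, a < 3 * k → b < 3 * k → a ≠ b →
      u + ((a : ℕ) : ZMod (3 * k)) ≠ u + ((b : ℕ) : ZMod (3 * k)) := by
    intro a b ha hb hab he
    exact hab (castEq (by omega) ha hb (add_left_cancel he))
  have hne0 : ∀ a : ℕ, 0 < a → a < 3 * k → u ≠ u + ((a : ℕ) : ZMod (3 * k)) := by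
    intro a h1 h2 he
    exact hne 0 a (by omega) h2 (by omega) (by simpa using he)
  have h23 : u + ((c : ℕ) : ZMod (3 * k)) ∉
      ({u + ((d : ℕ) : ZMod (3 * k))} : Finset (ZMod (3 * k))) := by
    simp only [Finset.mem_singleton]
    exact hne c d (by omega) (by omega) (by omega)
  have h12 : u + ((k : ℕ) : ZMod (3 * k)) ∉
      ({u + ((c : ℕ) : ZMod (3 * k)), u + ((d : ℕ) : ZMod (3 * k))} :
        Finset (ZMod (3 * k))) := by
    simp only [Finset.mem_insert, Finset.mem_singleton]
    push_neg
    exact ⟨hne k c (by omega) (by omega) (by omega),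
      hne k d (by omega) (by omega) (by omega)⟩
  have h01 : u ∉ ({u + ((k : ℕ) : ZMod (3 * k)), u + ((c : ℕ) : ZMod (3 * k)),
      u + ((d : ℕ) : ZMod (3 * k))} : Finset (ZMod (3 * k))) := by
    simp only [Finset.mem_insert, Finset.mem_singleton]
    push_neg
    exact ⟨hne0 k (by omega) (by omega), hne0 c (by omega) (by omega),
      hne0 d (by omega) (by omega)⟩
  rw [Finset.card_insert_of_notMem h01, Finset.card_insert_of_notMem h12,
    Finset.card_insert_of_notMem h23, Finset.card_singleton]

theorem stmt16 (k : ℕ) (hk : 3 ≤ k)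
    (W : Finset (ZMod (3 * k))) (hW : inFamilyW k W)
    (hj : ∃ j : ZMod (3 * k), (W ∩ xcov (3 * k) k j).card = 1) :
    ∃ x : Finset (ZMod (3 * k)), IsCover (3 * k) k x ∧ x.card = 4 ∧ ∀ j ∈ x, j ∉ W :=  by
  haveI : NeZero (3 * k) := ⟨by omega⟩
  -- Step 1: find u with u ∉ W and u + k ∉ W
  have hu : ∃ u : ZMod (3 * k), u ∉ W ∧ u + ((k : ℕ) : ZMod (3 * k)) ∉ W := by
    obtain ⟨j, hj1⟩ := hj
    by_contra hcon
    push_neg at hcon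
    have hdiv : 3 ≤ (3 * k + k - 1) / k := by
      rw [Nat.le_div_iff_mul_le (by omega : 0 < k)]; omega
    have hmem : ∀ h : ℕ, h < 3 → j + ((h * k : ℕ) : ZMod (3 * k)) ∈ xcov (3 * k) k j := by
      intro h hh
      exact Finset.mem_image.2 ⟨h, Finset.mem_range.2 (lt_of_lt_of_le hh hdiv), rfl⟩
    set e0 := j + ((0 * k : ℕ) : ZMod (3 * k)) with he0
    set e1 := j + ((1 * k : ℕ) : ZMod (3 * k)) with he1
    set e2 := j + ((2 * k : ℕ) : ZMod (3 * k)) with he2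
    have hne : ∀ a b : ℕ, a < 3 → b < 3 → a ≠ b →
        j + ((a * k : ℕ) : ZMod (3 * k)) ≠ j + ((b * k : ℕ) : ZMod (3 * k)) := by
      intro a b ha hb hab he
      have hak : a * k < 3 * k := by
        have := mul_le_mul_left (show a ≤ 2 by omega) k; omega
      have hbk : b * k < 3 * k := by
        have := mul_le_mul_left (show b ≤ 2 by omega) k; omega
      have h3 := castEq (n := 3 * k) (by omega) hak hbk (add_left_cancel he)
      exact hab (Nat.eq_of_mul_eq_mul_right (by omega) h3)
    have hs01 : e0 + ((k : ℕ) : ZMod (3 * k)) = e1 := by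
      rw [he0, he1, add_assoc, ← Nat.cast_add]; norm_num
    have hs12 : e1 + ((k : ℕ) : ZMod (3 * k)) = e2 := by
      rw [he1, he2, add_assoc, ← Nat.cast_add, (by omega : 1 * k + k = 2 * k)]
    have hs20 : e2 + ((k : ℕ) : ZMod (3 * k)) = e0 := by
      rw [he0, he2, add_assoc, ← Nat.cast_add,
        (by omega : 2 * k + k = 3 * k), (by omega : 0 * k = 0),
        ZMod.natCast_self, Nat.cast_zero]
    have two : ∃ p q : ZMod (3 * k), p ∈ W ∩ xcov (3 * k) k j ∧
        q ∈ W ∩ xcov (3 * k) k j ∧ p ≠ q := by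
      by_cases h0 : e0 ∈ W <;> by_cases h1 : e1 ∈ W <;> by_cases h2 : e2 ∈ W
      · exact ⟨e0, e1, Finset.mem_inter.2 ⟨h0, hmem 0 (by omega)⟩,
          Finset.mem_inter.2 ⟨h1, hmem 1 (by omega)⟩, hne 0 1 (by omega) (by omega) (by omega)⟩
      · exact ⟨e0, e1, Finset.mem_inter.2 ⟨h0, hmem 0 (by omega)⟩,
          Finset.mem_inter.2 ⟨h1, hmem 1 (by omega)⟩, hne 0 1 (by omega) (by omega) (by omega)⟩
      · exact ⟨e0, e2, Finset.mem_inter.2 ⟨h0, hmem 0 (by omega)⟩,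
          Finset.mem_inter.2 ⟨h2, hmem 2 (by omega)⟩, hne 0 2 (by omega) (by omega) (by omega)⟩
      · exact absurd (hs12 ▸ hcon e1 h1) h2
      · exact ⟨e1, e2, Finset.mem_inter.2 ⟨h1, hmem 1 (by omega)⟩,
          Finset.mem_inter.2 ⟨h2, hmem 2 (by omega)⟩, hne 1 2 (by omega) (by omega) (by omega)⟩
      · exact absurd (hs20 ▸ hcon e2 h2) h0
      · exact absurd (hs01 ▸ hcon e0 h0) h1
      · exact absurd (hs01 ▸ hcon e0 h0) h1
    obtain ⟨p, q, hp, hq, hpq⟩ := two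
    have := Finset.one_lt_card.2 ⟨p, hp, q, hq, hpq⟩
    omega
  obtain ⟨u, hu0, hu1⟩ := hu
  -- Step 2: last element of the complement in the window (u+k, u+2k]
  set T := (Finset.range k).filter
    (fun h => u + ((k + 1 + h : ℕ) : ZMod (3 * k)) ∉ W) with hT
  have hT2 : 2 ≤ T.card := windowTwo k W hW u (k + 1)
  have hTne : T.Nonempty := Finset.card_pos.1 (by omega)
  set s := T.max' hTne with hs_def
  have hsT : s ∈ T := T.max'_mem hTne
  have hsk : s < k := Finset.mem_range.1 (Finset.mem_filter.1 hsT).1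
  have hsW : u + ((k + 1 + s : ℕ) : ZMod (3 * k)) ∉ W := (Finset.mem_filter.1 hsT).2
  set c := k + 1 + s with hc_def
  -- Step 3: element in the window starting at u + c + 1
  set T2 := (Finset.range k).filter
    (fun h => u + ((c + 1 + h : ℕ) : ZMod (3 * k)) ∉ W) with hT2def
  have hT22 : 2 ≤ T2.card := windowTwo k W hW u (c + 1)
  have hlow : ∀ h ∈ T2, 2 * k + 1 ≤ c + 1 + h := by
    intro h hh
    by_contra hcontra
    push_neg at hcontra
    obtain ⟨hhr, hhW⟩ := Finset.mem_filter.1 hh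
    have hhk := Finset.mem_range.1 hhr
    have hsT' : s + 1 + h ∈ T := by
      refine Finset.mem_filter.2 ⟨Finset.mem_range.2 (by omega), ?_⟩
      have heq : k + 1 + (s + 1 + h) = c + 1 + h := by omega
      rw [heq]; exact hhW
    have := T.le_max' _ hsT'
    omega
  obtain ⟨h1, hh1, h2, hh2, hne12⟩ := Finset.one_lt_card.1 (by omega : 1 < T2.card)
  have hvne : u + ((c + 1 + h1 : ℕ) : ZMod (3 * k)) ≠
      u + ((c + 1 + h2 : ℕ) : ZMod (3 * k)) := by
    intro he
    have heq := add_left_cancel he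
    rcases le_total (c + 1 + h1) (c + 1 + h2) with hle | hle
    · have := castEqMod (n := 3 * k) (by omega) hle
        (by have := Finset.mem_range.1 (Finset.mem_filter.1 hh1).1
            have := Finset.mem_range.1 (Finset.mem_filter.1 hh2).1
            omega) heq
      exact hne12 (by omega)
    · have := castEqMod (n := 3 * k) (by omega) hle
        (by have := Finset.mem_range.1 (Finset.mem_filter.1 hh1).1
            have := Finset.mem_range.1 (Finset.mem_filter.1 hh2).1
            omega) heq.symm
      exact hne12 (by omega)
  have hchoice : ∃ h, h ∈ T2 ∧ u + ((c + 1 + h : ℕ) : ZMod (3 * k)) ≠ u := by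
    by_cases hq : u + ((c + 1 + h1 : ℕ) : ZMod (3 * k)) = u
    · exact ⟨h2, hh2, fun he => hvne (hq.trans he.symm)⟩
    · exact ⟨h1, hh1, hq⟩
  obtain ⟨h, hhT2, hneu⟩ := hchoice
  have hhk : h < k := Finset.mem_range.1 (Finset.mem_filter.1 hhT2).1
  set d := c + 1 + h with hd_def
  have hdW : u + ((d : ℕ) : ZMod (3 * k)) ∉ W := (Finset.mem_filter.1 hhT2).2
  have hd1 : 2 * k + 1 ≤ d := hlow h hhT2
  have hdne : d ≠ 3 * k := by
    intro hdeq
    apply hneu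
    rw [hd_def] at hdeq ⊢
    rw [hdeq, ZMod.natCast_self, add_zero]
  have hd2 : d < 3 * k := by omega
  refine ⟨{u, u + ((k : ℕ) : ZMod (3 * k)), u + ((c : ℕ) : ZMod (3 * k)),
      u + ((d : ℕ) : ZMod (3 * k))},
    coverFour k hk u c d (by omega) (by omega) hd1 hd2 (by omega),
    cardFour k hk u c d (by omega) (by omega) hd1 hd2, ?_⟩
  intro j' hj'
  simp only [Finset.mem_insert, Finset.mem_singleton] at hj'
  rcases hj' with rfl | rfl | rfl | rfl
  · exact hu0
  · exact hu1
  · exact hsW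
  · exact hdW
end

section
/- Let k ≥ 3 and let W ∈ 𝒲*. Then for every i ∈ W̄, p^i is not congruent to 0 modulo 3. -/
theorem stmt17 (k : ℕ) (hk : 3 ≤ k)
    (W : Finset (ZMod (3 * k))) (hW : inFamilyWstar k W) :
    ∀ i : ZMod (3 * k), i ∉ W → ¬ pW k W i % 3 = 0 := by
  
  obtain ⟨hW1, hW2, hW3⟩ := hW
  haveI : NeZero (3 * k) := ⟨by omega⟩
  have hx3 : (3 * k + k - 1) / k = 3 := by
    apply Nat.div_eq_of_lt_le <;> omega
  -- Lemma B: if j ∉ W then j + k ∈ W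
  have hB : ∀ j : ZMod (3 * k), j ∉ W → j + ((k : ℕ) : ZMod (3 * k)) ∈ W := by
    intro j hj
    by_contra hjk
    have h2 := hW2 j
    have hsub : xcov (3 * k) k j ∩ W ⊆ {j + ((2 * k : ℕ) : ZMod (3 * k))} := by
      intro l hl
      rw [Finset.mem_inter] at hl
      obtain ⟨hl1, hl2⟩ := hl
      simp only [xcov, hx3, Finset.mem_image, Finset.mem_range] at hl1
      obtain ⟨h, hh3, rfl⟩ := hl1
      have : h = 0 ∨ h = 1 ∨ h = 2 := by omega
      rcases this with rfl | rfl | rfl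
      · simp only [Nat.zero_mul, Nat.cast_zero, add_zero] at hl2
        exact absurd hl2 hj
      · simp only [Nat.one_mul] at hl2
        exact absurd hl2 hjk
      · simp [Finset.mem_singleton]
    have := Finset.card_le_card hsub
    simp only [Finset.card_singleton] at this
    omega
  -- Lemma A: nonempty + bound for omega set
  have hA : ∀ j : ZMod (3 * k), ∃ t : ℕ, t ≤ k - 1 ∧
      j + ((k : ℕ) : ZMod (3 * k)) + ((t : ℕ) : ZMod (3 * k)) ∉ W := by
    intro j
    have h2 := (hW1 (j + ((k : ℕ) : ZMod (3 * k)))).2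
    have hne : ((Cseg (3 * k) k (j + ((k : ℕ) : ZMod (3 * k)))).filter
        (fun l => l ∉ W)).Nonempty := by
      rw [← Finset.card_pos]; omega
    obtain ⟨l, hl⟩ := hne
    rw [Finset.mem_filter] at hl
    obtain ⟨hl1, hl2⟩ := hl
    simp only [Cseg, Finset.mem_image, Finset.mem_range] at hl1
    obtain ⟨t, htk, rfl⟩ := hl1
    exact ⟨t, by omega, hl2⟩
  have hωmem : ∀ j : ZMod (3 * k),
      j + ((k : ℕ) : ZMod (3 * k)) + ((omegaW k W j : ℕ) : ZMod (3 * k)) ∉ W := by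
    intro j
    obtain ⟨t, _, ht⟩ := hA j
    have hne : {t : ℕ | j + ((k : ℕ) : ZMod (3 * k)) + ((t : ℕ) : ZMod (3 * k)) ∉ W}.Nonempty :=
      ⟨t, ht⟩
    exact Nat.sInf_mem hne
  have hωle : ∀ j : ZMod (3 * k), omegaW k W j ≤ k - 1 := by
    intro j
    obtain ⟨t, htle, ht⟩ := hA j
    have hmem : t ∈ {t : ℕ | j + ((k : ℕ) : ZMod (3 * k)) + ((t : ℕ) : ZMod (3 * k)) ∉ W} := ht
    exact le_trans (Nat.sInf_le hmem) htle
  have hωpos : ∀ j : ZMod (3 * k), j ∉ W → 1 ≤ omegaW k W j := by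
    intro j hj
    rcases Nat.eq_zero_or_pos (omegaW k W j) with h0 | h
    · exfalso
      have hm := hωmem j
      rw [h0] at hm
      simp only [Nat.cast_zero, add_zero] at hm
      exact hm (hB j hj)
    · exact h
  intro i hi hp3
  have hrsucc : ∀ t : ℕ, rseqW k W i (t + 1) = rseqW k W i t + ((k : ℕ) : ZMod (3 * k))
      + ((omegaW k W (rseqW k W i t) : ℕ) : ZMod (3 * k)) := fun t => rfl
  have hrW : ∀ t, rseqW k W i t ∉ W := by
    intro t
    induction t with
    | zero => exact hi
    | succ t ih =>
      rw [hrsucc t]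
      exact hωmem (rseqW k W i t)
  have hrf : ∀ t, rseqW k W i t =
      i + ((t * k + ∑ j ∈ Finset.range t, omegaW k W (rseqW k W i j) : ℕ) : ZMod (3 * k)) := by
    intro t
    induction t with
    | zero => simp [show rseqW k W i 0 = i from rfl]
    | succ t ih =>
      rw [hrsucc t, Finset.sum_range_succ]
      generalize omegaW k W (rseqW k W i t) = a
      rw [ih]
      push_cast
      ring
  set S : ℕ → ℕ := fun t => ∑ j ∈ Finset.range t, omegaW k W (rseqW k W i j) with hSdef
  have hSmono : ∀ t, t ≤ S t := by
    intro t
    calc t = ∑ _j ∈ Finset.range t, 1 := by simp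
    _ ≤ S t := Finset.sum_le_sum (fun j _ => hωpos _ (hrW j))
  have hbdd : BddAbove {t : ℕ | S t ≤ k - 1} := ⟨k - 1, fun t ht => le_trans (hSmono t) ht⟩
  have h1mem : (1 : ℕ) ∈ {t : ℕ | S t ≤ k - 1} := by
    have : S 1 = omegaW k W i := by
      simp [hSdef, Finset.sum_range_one, rseqW]
    simp only [Set.mem_setOf_eq, this]
    exact hωle i
  have hpdef : pW k W i = sSup {t : ℕ | S t ≤ k - 1} := rfl
  have hpmem : S (pW k W i) ≤ k - 1 := by
    have := Nat.sSup_mem ⟨1, h1mem⟩ hbdd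
    rw [hpdef]
    exact this
  have hp1 : 1 ≤ pW k W i := by
    rw [hpdef]
    exact le_csSup hbdd h1mem
  have hpsucc : ¬ S (pW k W i + 1) ≤ k - 1 := by
    intro h
    have := le_csSup hbdd h
    rw [← hpdef] at this
    omega
  have hSsucc : S (pW k W i + 1) = S (pW k W i) + omegaW k W (rseqW k W i (pW k W i)) :=
    Finset.sum_range_succ _ _
  have hkey : k ≤ S (pW k W i) + omegaW k W (rseqW k W i (pW k W i)) := by
    rw [← hSsucc]; omega
  obtain ⟨m, hm⟩ := Nat.dvd_of_mod_eq_zero hp3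
  have hrp : rseqW k W i (pW k W i) = i + ((S (pW k W i) : ℕ) : ZMod (3 * k)) := by
    have h1 : (3 * m) * k + S (pW k W i) = m * (3 * k) + S (pW k W i) := by ring
    rw [hrf (pW k W i)]
    rw [show (pW k W i) * k + S (pW k W i) = (3 * m) * k + S (pW k W i) by rw [hm]]
    rw [h1, Nat.cast_add, Nat.cast_mul, ZMod.natCast_self, mul_zero, zero_add]
  have hmem : i ∈ cycInterval (3 * k)
      (rseqW k W i (pW k W i) + ((2 * k : ℕ) : ZMod (3 * k)))
      (rseqW k W i (pW k W i) + ((2 * k : ℕ) : ZMod (3 * k))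
        + ((omegaW k W (rseqW k W i (pW k W i)) : ℕ) : ZMod (3 * k))) := by
    simp only [cycInterval, Finset.mem_image, Finset.mem_range]
    refine ⟨k - S (pW k W i), ?_, ?_⟩
    · have hval : (rseqW k W i (pW k W i) + ((2 * k : ℕ) : ZMod (3 * k))
          + ((omegaW k W (rseqW k W i (pW k W i)) : ℕ) : ZMod (3 * k)))
          - (rseqW k W i (pW k W i) + ((2 * k : ℕ) : ZMod (3 * k)))
          = ((omegaW k W (rseqW k W i (pW k W i)) : ℕ) : ZMod (3 * k)) := by ring
      rw [hval, ZMod.val_cast_of_lt]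
      · have := hωle (rseqW k W i (pW k W i))
        omega
      · have := hωle (rseqW k W i (pW k W i))
        omega
    · rw [hrp]
      have h3k : S (pW k W i) + 2 * k + (k - S (pW k W i)) = 3 * k := by omega
      calc i + ((S (pW k W i) : ℕ) : ZMod (3 * k)) + ((2 * k : ℕ) : ZMod (3 * k))
            + ((k - S (pW k W i) : ℕ) : ZMod (3 * k))
          = i + ((S (pW k W i) + 2 * k + (k - S (pW k W i)) : ℕ) : ZMod (3 * k)) := by
            push_cast; ring
        _ = i + ((3 * k : ℕ) : ZMod (3 * k)) := by rw [h3k]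
        _ = i := by rw [ZMod.natCast_self, add_zero]
  exact hi (hW3 _ (hrW (pW k W i)) hmem)
end

section
/- Let k ≥ 3 and let W ∈ 𝒲*. Then there exists i ∈ W̄ with p^i ≡ 1 (mod 3). -/
/-! The map `r(x) = x + k + ω(x)` sends `ℤ_{3k}` into `W̄`, so some `y ∈ W̄` is `r`-periodic; let
`L` be its minimal period and `S` the sum of `ω` along its orbit. Going once around the orbit
gives `3k ∣ Lk + S`. For `x` on the orbit, the `ω(x) + ω(r x)` points just before `r²(x)` lie in
`W` (minimality of `ω(r x)` and the interval condition of `𝒲*` at `x`); these runs are pairwise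
disjoint and `ω ≥ 1` on the orbit, so `2S + L ≤ 3k` and `S > 0`. This forces `S = k` and
`L ≡ 2 (mod 3)`, and then `p^y = L - 1`. -/

open Function Finset

theorem Function.exists_iterate_mem_periodicPts {α : Type*} [Finite α] (f : α → α) (x : α) :
    ∃ n, f^[n] x ∈ periodicPts f := by
  obtain ⟨m, n, hne, heq⟩ := Finite.exists_ne_map_eq_of_infinite (f^[·] x)
  wlog hlt : m < n generalizing m n
  · exact this n m hne.symm heq.symm (by omega)
  refine ⟨m, mk_mem_periodicPts (n := n - m) (by omega) ?_⟩
  change f^[n - m] (f^[m] x) = f^[m] x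
  rw [← iterate_add_apply, Nat.sub_add_cancel hlt.le]
  exact heq.symm

/-- Two runs of `W` ending just before points `b, b' ∉ W` cannot overlap out of step. -/
theorem eq_of_sub_eq_sub_of_forall_mem {R : Type*} [AddCommGroupWithOne R] {W : Finset R}
    {b b' : R} (hb : b ∉ W) (hb' : b' ∉ W) {s s' : ℕ}
    (hs : ∀ u < s, b - ((u + 1 : ℕ) : R) ∈ W) (hs' : ∀ u < s', b' - ((u + 1 : ℕ) : R) ∈ W)
    (h : b - ((s + 1 : ℕ) : R) = b' - ((s' + 1 : ℕ) : R)) : s = s' ∧ b = b' := by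
  wlog hle : s ≤ s' generalizing s s' b b'
  · exact (this hb' hb hs' hs h.symm (by omega)).imp Eq.symm Eq.symm
  obtain ⟨d, rfl⟩ := Nat.exists_eq_add_of_le hle
  have hbb' : b = b' - ((d : ℕ) : R) := by
    push_cast at h
    linear_combination (norm := abel_nf) h
  rcases d with _ | d
  · simpa using hbb'
  · exact absurd (hbb' ▸ hs' d (by omega)) hb

theorem sSup_setOf_sum_range_le_eq {g : ℕ → ℕ} {c n : ℕ} (hn : ∑ j ∈ range n, g j ≤ c)
    (hn1 : c < ∑ j ∈ range (n + 1), g j) : sSup {t | ∑ j ∈ range t, g j ≤ c} = n := by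
  have hIic : {t | ∑ j ∈ range t, g j ≤ c} = Set.Iic n := by
    ext t
    simp only [Set.mem_ofPred_eq, Set.mem_Iic]
    refine ⟨fun ht => ?_, fun ht => (sum_le_sum_of_subset (range_subset_range.2 ht)).trans hn⟩
    by_contra! hnt
    exact (ht.trans_lt hn1).not_ge (sum_le_sum_of_subset (range_subset_range.2 hnt))
  rw [hIic, csSup_Iic]

theorem eq_and_mod_three_eq_two_of_dvd {k L S : ℕ} (hk : 0 < k) (hS : 0 < S)
    (hle : 2 * S + L ≤ 3 * k) (hdvd : 3 * k ∣ L * k + S) : S = k ∧ L % 3 = 2 := by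
  obtain ⟨q, rfl⟩ : k ∣ S :=
    (Nat.dvd_add_right (dvd_mul_left k L)).1 ((dvd_mul_left k 3).trans hdvd)
  obtain rfl : q = 1 := by
    have : 0 < q := Nat.pos_of_mul_pos_left hS
    nlinarith
  have : 3 ∣ L + 1 := Nat.dvd_of_mul_dvd_mul_right hk (by simpa [add_mul] using hdvd)
  exact ⟨mul_one k, by omega⟩

section FamilyW

variable {k : ℕ} {W : Finset (ZMod (3 * k))}

noncomputable def nextW (k : ℕ) (W : Finset (ZMod (3 * k))) (i : ZMod (3 * k)) : ZMod (3 * k) :=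
  i + k + omegaW k W i

theorem rseqW_eq_iterate (i : ZMod (3 * k)) (t : ℕ) : rseqW k W i t = (nextW k W)^[t] i := by
  induction t with
  | zero => rfl
  | succ t ih => rw [iterate_succ_apply', ← ih]; rfl

theorem iterate_nextW_eq (y : ZMod (3 * k)) (t : ℕ) :
    (nextW k W)^[t] y =
      y + ((t * k + ∑ j ∈ range t, omegaW k W ((nextW k W)^[j] y) : ℕ) : ZMod (3 * k)) := by
  induction t with
  | zero => simp
  | succ t ih =>
    rw [iterate_succ_apply', nextW, sum_range_succ]
    nth_rw 1 [ih]
    push_cast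
    ring

theorem dvd_minimalPeriod_mul_add_sum_omegaW (y : ZMod (3 * k)) :
    3 * k ∣ minimalPeriod (nextW k W) y * k +
      ∑ t ∈ range (minimalPeriod (nextW k W) y), omegaW k W ((nextW k W)^[t] y) := by
  have h := iterate_nextW_eq (W := W) y (minimalPeriod (nextW k W) y)
  rw [iterate_minimalPeriod, left_eq_add] at h
  exact (ZMod.natCast_eq_zero_iff _ _).1 h

theorem add_mem_of_lt_omegaW {i : ZMod (3 * k)} {t : ℕ} (ht : t < omegaW k W i) :
    i + k + t ∈ W := by
  simpa using Nat.notMem_of_lt_sInf ht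

namespace inFamilyW

variable (hW : inFamilyW k W)
include hW

theorem two_le : 2 ≤ k :=
  calc 2 ≤ ((Cseg (3 * k) k 0).filter (· ∉ W)).card := (hW 0).2
    _ ≤ (Cseg (3 * k) k 0).card := card_filter_le _ _
    _ ≤ k := card_image_le.trans (card_range k).le

theorem neZero : NeZero (3 * k) := ⟨by have := hW.two_le; omega⟩

theorem exists_notMem : ∃ x, x ∉ W := by
  obtain ⟨x, hx⟩ := card_pos.1 (lt_of_lt_of_le two_pos (hW 0).2)
  exact ⟨x, (mem_filter.1 hx).2⟩

theorem exists_add_notMem (i : ZMod (3 * k)) : ∃ t < 3 * k, i + k + t ∉ W := by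
  have := hW.neZero
  obtain ⟨x, hx⟩ := hW.exists_notMem
  refine ⟨(x - (i + k)).val, ZMod.val_lt _, ?_⟩
  rwa [ZMod.natCast_zmod_val, add_sub_cancel]

theorem omegaW_lt (i : ZMod (3 * k)) : omegaW k W i < 3 * k := by
  obtain ⟨t, ht, hnot⟩ := hW.exists_add_notMem i
  exact (Nat.sInf_le hnot).trans_lt ht

theorem nextW_notMem (i : ZMod (3 * k)) : nextW k W i ∉ W := by
  obtain ⟨t, -, hnot⟩ := hW.exists_add_notMem i
  exact Nat.sInf_mem (s := {t : ℕ | i + k + t ∉ W}) ⟨t, hnot⟩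

theorem iterate_nextW_notMem {y : ZMod (3 * k)} (hy : y ∉ W) (t : ℕ) :
    (nextW k W)^[t] y ∉ W := by
  cases t with
  | zero => exact hy
  | succ t => rw [iterate_succ_apply']; exact hW.nextW_notMem _

end inFamilyW

namespace inFamilyWstar

variable (hW : inFamilyWstar k W)
include hW

theorem add_two_mul_add_mem {i : ZMod (3 * k)} (hi : i ∉ W) {v : ℕ} (hv : v ≤ omegaW k W i) :
    i + ((2 * k : ℕ) : ZMod (3 * k)) + v ∈ W := by
  apply hW.2.2 i hi
  refine mem_image.2 ⟨v, mem_range.2 ?_, rfl⟩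
  rw [add_sub_cancel_left, ZMod.val_natCast_of_lt (hW.1.omegaW_lt i)]
  omega

theorem nextW_nextW_sub_mem {i : ZMod (3 * k)} (hi : i ∉ W) {s : ℕ}
    (hs : s < omegaW k W i + omegaW k W (nextW k W i)) :
    nextW k W (nextW k W i) - ((s + 1 : ℕ) : ZMod (3 * k)) ∈ W := by
  rcases Nat.lt_or_ge s (omegaW k W (nextW k W i)) with hlt | hge
  · obtain ⟨u, hu⟩ := Nat.exists_eq_add_of_lt hlt
    have hmem := add_mem_of_lt_omegaW (W := W) (i := nextW k W i) (t := u) (by omega)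
    convert hmem using 1
    rw [nextW.eq_1 k W (nextW k W i), hu]
    push_cast
    ring
  · obtain ⟨u, rfl⟩ := Nat.exists_eq_add_of_le hge
    obtain ⟨v, hv⟩ := Nat.exists_eq_add_of_lt (show u < omegaW k W i by omega)
    convert hW.add_two_mul_add_mem hi (v := v) (by omega) using 1
    rw [nextW.eq_1 k W (nextW k W i), nextW.eq_1 k W i, hv]
    push_cast
    ring

theorem one_le_omegaW_nextW {i : ZMod (3 * k)} (hi : i ∉ W) : 1 ≤ omegaW k W (nextW k W i) := by
  by_contra! h0
  apply hW.1.nextW_notMem (nextW k W i)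
  convert hW.add_two_mul_add_mem hi le_rfl using 1
  rw [nextW.eq_1 k W (nextW k W i), Nat.lt_one_iff.1 h0, nextW.eq_1 k W i]
  push_cast
  ring

end inFamilyWstar

end FamilyW

section Cycle

variable {k : ℕ} {W : Finset (ZMod (3 * k))} (hW : inFamilyWstar k W) {y : ZMod (3 * k)}
  (hy : y ∉ W) (hper : y ∈ periodicPts (nextW k W))
include hW hy hper

theorem one_le_omegaW_iterate (t : ℕ) : 1 ≤ omegaW k W ((nextW k W)^[t] y) := by
  have hL := minimalPeriod_pos_of_mem_periodicPts hper
  rw [← iterate_add_minimalPeriod_eq, ← Nat.sub_add_cancel (show 1 ≤ t + _ by omega),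
    iterate_succ_apply']
  exact hW.one_le_omegaW_nextW (hW.1.iterate_nextW_notMem hy _)

theorem sum_omegaW_add_omegaW_le_card :
    ∑ t ∈ range (minimalPeriod (nextW k W) y),
      (omegaW k W ((nextW k W)^[t] y) + omegaW k W ((nextW k W)^[t + 1] y)) ≤ #W := by
  set f := nextW k W
  have haW : ∀ t, f^[t] y ∉ W := hW.1.iterate_nextW_notMem hy
  have hrun : ∀ t, ∀ s < omegaW k W (f^[t] y) + omegaW k W (f^[t + 1] y),
      f^[t + 2] y - ((s + 1 : ℕ) : ZMod (3 * k)) ∈ W := fun t s hs => by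
    rw [iterate_succ_apply'] at hs
    simpa only [iterate_succ_apply'] using hW.nextW_nextW_sub_mem (haW t) hs
  have hinj2 : (Set.Iio (minimalPeriod f y)).InjOn (fun t => f^[t + 2] y) := by
    have := iterate_injOn_Iio_minimalPeriod (f := f) (x := f^[2] y)
    simpa only [minimalPeriod_apply_iterate hper, ← iterate_add_apply] using this
  have hruns : #((range (minimalPeriod f y)).sigma fun t =>
      range (omegaW k W (f^[t] y) + omegaW k W (f^[t + 1] y))) ≤ #W := by
    refine card_le_card_of_injOn (fun p => f^[p.1 + 2] y - ((p.2 + 1 : ℕ) : ZMod (3 * k)))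
      (fun p hp => ?_) (fun p hp q hq hpq => ?_)
    · simp only [mem_coe, mem_sigma, mem_range] at hp
      exact hrun p.1 p.2 hp.2
    · simp only [mem_coe, mem_sigma, mem_range] at hp hq
      obtain ⟨hs, hb⟩ := eq_of_sub_eq_sub_of_forall_mem (haW _) (haW _)
        (fun u hu => hrun p.1 u (hu.trans hp.2)) (fun u hu => hrun q.1 u (hu.trans hq.2)) hpq
      obtain ⟨t, s⟩ := p
      obtain ⟨t', s'⟩ := q
      obtain rfl : t = t' := hinj2 hp.1 hq.1 hb
      obtain rfl : s = s' := hs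
      rfl
  simpa only [card_sigma, card_range] using hruns

theorem two_mul_sum_omegaW_add_minimalPeriod_le :
    2 * ∑ t ∈ range (minimalPeriod (nextW k W) y), omegaW k W ((nextW k W)^[t] y) +
      minimalPeriod (nextW k W) y ≤ 3 * k := by
  have := hW.1.neZero
  have hruns := sum_omegaW_add_omegaW_le_card hW hy hper
  set f := nextW k W
  set L := minimalPeriod f y
  have horbit : L ≤ #Wᶜ := by
    have := card_le_card_of_injOn (s := range L) (f^[·] y)
      (fun t _ => mem_compl.2 (hW.1.iterate_nextW_notMem hy t))
      (by rw [coe_range]; exact iterate_injOn_Iio_minimalPeriod)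
    rwa [card_range] at this
  have hshift : ∑ t ∈ range L, omegaW k W (f^[t + 1] y) =
      ∑ t ∈ range L, omegaW k W (f^[t] y) := by
    have h1 := sum_range_succ' (fun t => omegaW k W (f^[t] y)) L
    have h2 := sum_range_succ (fun t => omegaW k W (f^[t] y)) L
    have hLy : f^[L] y = y := iterate_minimalPeriod
    rw [hLy] at h2
    rw [iterate_zero_apply] at h1
    omega
  have hcard := card_add_card_compl W
  rw [ZMod.card] at hcard
  rw [sum_add_distrib, hshift] at hruns
  omega

theorem pW_eq_minimalPeriod_sub_one
    (hS : ∑ t ∈ range (minimalPeriod (nextW k W) y), omegaW k W ((nextW k W)^[t] y) = k) :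
    pW k W y = minimalPeriod (nextW k W) y - 1 := by
  have hL := minimalPeriod_pos_of_mem_periodicPts hper
  have hlast := sum_range_succ (fun t => omegaW k W ((nextW k W)^[t] y))
    (minimalPeriod (nextW k W) y - 1)
  rw [Nat.sub_add_cancel hL, hS] at hlast
  have := one_le_omegaW_iterate hW hy hper (minimalPeriod (nextW k W) y - 1)
  simp only [pW, rseqW_eq_iterate]
  exact sSup_setOf_sum_range_le_eq (by omega) (by rw [Nat.sub_add_cancel hL]; omega)

end Cycle

theorem stmt18_general (k : ℕ)
    (W : Finset (ZMod (3 * k))) (hW : inFamilyWstar k W) :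
    ∃ i : ZMod (3 * k), i ∉ W ∧ pW k W i % 3 = 1 := by
  have := hW.1.neZero
  obtain ⟨x, hx⟩ := hW.1.exists_notMem
  obtain ⟨n, hper⟩ := (nextW k W).exists_iterate_mem_periodicPts x
  have hy := hW.1.iterate_nextW_notMem hx n
  have hL := minimalPeriod_pos_of_mem_periodicPts hper
  have hS := (one_le_omegaW_iterate hW hy hper 0).trans
    (single_le_sum (f := fun t => omegaW k W ((nextW k W)^[t] _)) (fun _ _ => Nat.zero_le _)
      (mem_range.2 hL))
  obtain ⟨hSk, hL3⟩ := eq_and_mod_three_eq_two_of_dvd (by have := hW.1.two_le; omega) hS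
    (two_mul_sum_omegaW_add_minimalPeriod_le hW hy hper) (dvd_minimalPeriod_mul_add_sum_omegaW _)
  refine ⟨_, hy, ?_⟩
  rw [pW_eq_minimalPeriod_sub_one hW hy hper hSk]
  omega

theorem stmt18 (k : ℕ) (hk : 3 ≤ k)
    (W : Finset (ZMod (3 * k))) (hW : inFamilyWstar k W) :
    ∃ i : ZMod (3 * k), i ∉ W ∧ pW k W i % 3 = 1 :=
  stmt18_general k W hW
end
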